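/- arXiv:math/0203066 — 6 statements merged into one kernel-verified Lean document; each statement's English description precedes it below -/
import Mathlib

section
/- For every f ∈ Diff_0([0,1]), one has lim_{n→∞} Γ_n(f)^{1/n} = 1 if and only if f'(ξ) = 1 for every fixed point ξ of f. -/
/-- `IsDiff0 f g` says that `f` is an orientation-preserving `C¹` diffeomorphism of the
interval `[0,1]` fixing the endpoints, with inverse `g`. -/
structure IsDiff0 (f g : ℝ → ℝ) : Prop where
  mapsTo : Set.MapsTo f (Set.Icc 0 1) (Set.Icc 0 1)
  mapsTo_inv : Set.MapsTo g (Set.Icc 0 1) (Set.Icc 0 1)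
  left_inv : ∀ x ∈ Set.Icc (0:ℝ) 1, g (f x) = x
  right_inv : ∀ x ∈ Set.Icc (0:ℝ) 1, f (g x) = x
  map_zero : f 0 = 0
  map_one : f 1 = 1
  contDiffOn : ContDiffOn ℝ 1 f (Set.Icc 0 1)
  contDiffOn_inv : ContDiffOn ℝ 1 g (Set.Icc 0 1)
  deriv_pos : ∀ x ∈ Set.Icc (0:ℝ) 1, 0 < derivWithin f (Set.Icc 0 1) x

/-- The growth sequence `Γ_n(f) = max (sup_x (fⁿ)'(x), sup_x (f⁻ⁿ)'(x))`, where `g = f⁻¹`. -/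
noncomputable def Gamma (f g : ℝ → ℝ) (n : ℕ) : ℝ :=
  max (⨆ x : Set.Icc (0:ℝ) 1, derivWithin (f^[n]) (Set.Icc 0 1) (x : ℝ))
      (⨆ x : Set.Icc (0:ℝ) 1, derivWithin (g^[n]) (Set.Icc 0 1) (x : ℝ))

/-!
If `f'(ξ) ≠ 1` at a fixed point `ξ`, then one of `f'(ξ)` and `(f⁻¹)'(ξ) = f'(ξ)⁻¹` is some
`μ > 1`, and `μⁿ` is the derivative of `f^{±n}` at `ξ`, so `Γ_n ≥ μⁿ`.

Conversely, let `f' = 1` at every fixed point and fix `c > 1`. The compact set `K = {f' ≥ c}`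
contains no fixed point, so `|f y - y| ≥ η > 0` on `K`. Orbits of the increasing map `f` are
monotone sequences in `[0,1]`, so an orbit visits `K` at most `1/η` times, and the chain rule
`(fⁿ)'(x) = ∏ₖ f'(fᵏ x)` gives `(fⁿ)'(x) ≤ (max f')^{1/η} cⁿ`. The same holds for `f⁻¹`; together
with `Γ_n ≥ (fⁿ)'(0) = 1` this gives `Γ_n^{1/n} → 1`.
-/

open Set Filter Topology Finset

section Iterate

variable {𝕜 : Type*} [NontriviallyNormedField 𝕜] {f : 𝕜 → 𝕜} {s : Set 𝕜}

theorem DifferentiableOn.hasDerivWithinAt_iterate (hf : DifferentiableOn 𝕜 f s)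
    (hs : MapsTo f s s) (n : ℕ) {x : 𝕜} (hx : x ∈ s) :
    HasDerivWithinAt (f^[n]) (∏ k ∈ range n, derivWithin f s (f^[k] x)) s x := by
  induction n generalizing x with
  | zero => simpa using hasDerivWithinAt_id x s
  | succ n ih =>
    rw [Function.iterate_succ, prod_range_succ']
    simpa only [Function.iterate_succ_apply, Function.iterate_zero_apply] using
      (ih (hs hx)).comp x (hf x hx).hasDerivWithinAt hs

theorem DifferentiableOn.derivWithin_iterate (hf : DifferentiableOn 𝕜 f s) (hs : MapsTo f s s)
    (hu : UniqueDiffOn 𝕜 s) (n : ℕ) {x : 𝕜} (hx : x ∈ s) :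
    derivWithin (f^[n]) s x = ∏ k ∈ range n, derivWithin f s (f^[k] x) :=
  (hf.hasDerivWithinAt_iterate hs n hx).derivWithin (hu x hx)

end Iterate

theorem ContDiffOn.iterate {𝕜 E : Type*} [NontriviallyNormedField 𝕜] [NormedAddCommGroup E]
    [NormedSpace 𝕜 E] {f : E → E} {s : Set E} {m : WithTop ℕ∞} (hf : ContDiffOn 𝕜 m f s)
    (hs : MapsTo f s s) (n : ℕ) : ContDiffOn 𝕜 m (f^[n]) s := by
  induction n with
  | zero => exact contDiffOn_id
  | succ n ih => rw [Function.iterate_succ']; exact hf.comp ih (hs.iterate n)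

theorem MonotoneOn.monotone_iterate_of_le_map {α : Type*} [Preorder α] {f : α → α} {s : Set α}
    (hf : MonotoneOn f s) (hs : MapsTo f s s) {x : α} (hx : x ∈ s) (h : x ≤ f x) :
    Monotone fun n => f^[n] x := by
  refine monotone_nat_of_le_succ fun n => ?_
  induction n with
  | zero => exact h
  | succ n ih =>
    simpa only [Function.iterate_succ_apply'] using
      hf (hs.iterate n hx) (hs.iterate (n + 1) hx) ih

theorem MonotoneOn.antitone_iterate_of_map_le {α : Type*} [Preorder α] {f : α → α} {s : Set α}
    (hf : MonotoneOn f s) (hs : MapsTo f s s) {x : α} (hx : x ∈ s) (h : f x ≤ x) :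
    Antitone fun n => f^[n] x :=
  hf.dual.monotone_iterate_of_le_map hs hx h

theorem Monotone.card_mul_le_abs_sub {u : ℕ → ℝ} (hu : Monotone u) {η : ℝ} {n : ℕ}
    {S : Finset ℕ} (hS : S ⊆ range n) (hη : ∀ k ∈ S, η ≤ |u (k + 1) - u k|) :
    #S * η ≤ |u n - u 0| := by
  have hstep : ∀ k, |u (k + 1) - u k| = u (k + 1) - u k := fun k =>
    abs_of_nonneg (sub_nonneg.mpr (hu k.le_succ))
  calc #S * η = ∑ _k ∈ S, η := by rw [sum_const, nsmul_eq_mul]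
    _ ≤ ∑ k ∈ S, |u (k + 1) - u k| := sum_le_sum hη
    _ ≤ ∑ k ∈ range n, |u (k + 1) - u k| :=
        sum_le_sum_of_subset_of_nonneg hS fun _ _ _ => abs_nonneg _
    _ = u n - u 0 := by simp only [hstep, sum_range_sub u n]
    _ ≤ |u n - u 0| := le_abs_self _

theorem Antitone.card_mul_le_abs_sub {u : ℕ → ℝ} (hu : Antitone u) {η : ℝ} {n : ℕ}
    {S : Finset ℕ} (hS : S ⊆ range n) (hη : ∀ k ∈ S, η ≤ |u (k + 1) - u k|) :
    #S * η ≤ |u n - u 0| := by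
  simpa only [Pi.neg_apply, ← neg_sub', abs_neg] using
    hu.neg.card_mul_le_abs_sub hS (by simpa only [Pi.neg_apply, ← neg_sub', abs_neg] using hη)

theorem Finset.prod_le_pow_card_filter_mul_pow {ι : Type*} {s : Finset ι} {a : ι → ℝ}
    {p : ι → Prop} [DecidablePred p] {B c : ℝ} (ha : ∀ i ∈ s, 0 ≤ a i) (hB₀ : 0 ≤ B)
    (hB : ∀ i ∈ s, p i → a i ≤ B) (hc : ∀ i ∈ s, ¬p i → a i ≤ c) (hc₁ : 1 ≤ c) :
    ∏ i ∈ s, a i ≤ B ^ #{i ∈ s | p i} * c ^ #s := by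
  calc ∏ i ∈ s, a i ≤ ∏ i ∈ s, if p i then B else c :=
        prod_le_prod ha fun i hi => by split_ifs with h; exacts [hB i hi h, hc i hi h]
    _ = B ^ #{i ∈ s | p i} * c ^ #{i ∈ s | ¬p i} := by rw [prod_ite, prod_const, prod_const]
    _ ≤ B ^ #{i ∈ s | p i} * c ^ #s := by gcongr; exact filter_subset _ _

theorem le_of_pow_le_of_tendsto_rpow_one_div {u : ℕ → ℝ} {μ L : ℝ} (hμ : 0 ≤ μ)
    (hu : ∀ n, μ ^ n ≤ u n) (hL : Tendsto (fun n : ℕ => u n ^ (1 / (n : ℝ))) atTop (𝓝 L)) :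
    μ ≤ L := by
  refine ge_of_tendsto hL (eventually_ne_atTop 0 |>.mono fun n hn => ?_)
  calc μ = (μ ^ n) ^ (1 / (n : ℝ)) := by rw [one_div, Real.pow_rpow_inv_natCast hμ hn]
    _ ≤ u n ^ (1 / (n : ℝ)) := Real.rpow_le_rpow (by positivity) (hu n) (by positivity)

theorem tendsto_rpow_one_div_of_subexponential {u : ℕ → ℝ} (hu : ∀ n, 1 ≤ u n)
    (hsub : ∀ c > 1, ∃ C, ∀ n, u n ≤ C * c ^ n) :
    Tendsto (fun n : ℕ => u n ^ (1 / (n : ℝ))) atTop (𝓝 1) := by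
  refine tendsto_order.2 ⟨fun a ha => Eventually.of_forall fun n => ?_, fun b hb => ?_⟩
  · exact ha.trans_le (Real.one_le_rpow (hu n) (by positivity))
  obtain ⟨c, hc, hcb⟩ := exists_between hb
  obtain ⟨C, hC⟩ := hsub c hc
  have hC0 : 0 < C := by simpa using (zero_lt_one.trans_le (hu 0)).trans_le (hC 0)
  have hroot : Tendsto (fun n : ℕ => C ^ (1 / (n : ℝ))) atTop (𝓝 1) := by
    simpa [Function.comp_def] using ((Real.continuousAt_const_rpow hC0.ne').tendsto).comp
      tendsto_one_div_atTop_nhds_zero_nat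
  filter_upwards [hroot.eventually_lt_const ((one_lt_div (by positivity)).2 hcb),
    eventually_ne_atTop 0] with n hn hn0
  calc u n ^ (1 / (n : ℝ)) ≤ (C * c ^ n) ^ (1 / (n : ℝ)) :=
        Real.rpow_le_rpow (by linarith [hu n]) (hC n) (by positivity)
    _ = C ^ (1 / (n : ℝ)) * c := by
        rw [Real.mul_rpow hC0.le (by positivity), one_div,
          Real.pow_rpow_inv_natCast (by positivity) hn0, ← one_div]
    _ < b / c * c := by gcongr
    _ = b := div_mul_cancel₀ b (by positivity)

theorem Gamma_comm (f g : ℝ → ℝ) (n : ℕ) : Gamma f g n = Gamma g f n := max_comm _ _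

theorem Gamma_le {f g : ℝ → ℝ} {n : ℕ} {A : ℝ}
    (hf : ∀ x ∈ Icc (0 : ℝ) 1, derivWithin (f^[n]) (Icc 0 1) x ≤ A)
    (hg : ∀ x ∈ Icc (0 : ℝ) 1, derivWithin (g^[n]) (Icc 0 1) x ≤ A) : Gamma f g n ≤ A :=
  have : Nonempty (Icc (0 : ℝ) 1) := (Set.nonempty_Icc.2 zero_le_one).to_subtype
  max_le (ciSup_le fun x => hf x x.2) (ciSup_le fun x => hg x x.2)

namespace IsDiff0

variable {f g : ℝ → ℝ} (hf : IsDiff0 f g)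
include hf

theorem differentiableOn : DifferentiableOn ℝ f (Icc 0 1) :=
  hf.contDiffOn.differentiableOn one_ne_zero

theorem derivWithin_iterate (n : ℕ) {x : ℝ} (hx : x ∈ Icc (0 : ℝ) 1) :
    derivWithin (f^[n]) (Icc 0 1) x = ∏ k ∈ range n, derivWithin f (Icc 0 1) (f^[k] x) :=
  hf.differentiableOn.derivWithin_iterate hf.mapsTo (uniqueDiffOn_Icc zero_lt_one) n hx

theorem derivWithin_inv_mul {x : ℝ} (hx : x ∈ Icc (0 : ℝ) 1) :
    derivWithin g (Icc 0 1) (f x) * derivWithin f (Icc 0 1) x = 1 := by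
  have hgf : HasDerivWithinAt (g ∘ f)
      (derivWithin g (Icc 0 1) (f x) * derivWithin f (Icc 0 1) x) (Icc 0 1) x :=
    ((hf.contDiffOn_inv.differentiableOn one_ne_zero) _ (hf.mapsTo hx)).hasDerivWithinAt.comp x
      (hf.differentiableOn x hx).hasDerivWithinAt hf.mapsTo
  have hid : HasDerivWithinAt (g ∘ f) 1 (Icc 0 1) x :=
    (hasDerivWithinAt_id x _).congr_of_mem hf.left_inv hx
  exact (uniqueDiffOn_Icc zero_lt_one x hx).eq_deriv _ hgf hid

theorem symm : IsDiff0 g f where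
  mapsTo := hf.mapsTo_inv
  mapsTo_inv := hf.mapsTo
  left_inv := hf.right_inv
  right_inv := hf.left_inv
  map_zero := by simpa [hf.map_zero] using hf.left_inv 0 (left_mem_Icc.2 zero_le_one)
  map_one := by simpa [hf.map_one] using hf.left_inv 1 (right_mem_Icc.2 zero_le_one)
  contDiffOn := hf.contDiffOn_inv
  contDiffOn_inv := hf.contDiffOn
  deriv_pos y hy := by
    have h := hf.derivWithin_inv_mul (hf.mapsTo_inv hy)
    rw [hf.right_inv y hy] at h
    exact pos_of_mul_pos_left (by rw [h]; exact one_pos) (hf.deriv_pos _ (hf.mapsTo_inv hy)).le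

theorem inv_apply_eq_self_of_apply_eq_self {x : ℝ} (hx : x ∈ Icc (0 : ℝ) 1) (h : f x = x) :
    g x = x := by
  simpa only [h] using hf.left_inv x hx

theorem derivWithin_inv_of_apply_eq_self {x : ℝ} (hx : x ∈ Icc (0 : ℝ) 1) (h : f x = x) :
    derivWithin g (Icc 0 1) x = (derivWithin f (Icc 0 1) x)⁻¹ :=
  eq_inv_of_mul_eq_one_left (by simpa only [h] using hf.derivWithin_inv_mul hx)

theorem monotoneOn : MonotoneOn f (Icc 0 1) :=
  (strictMonoOn_of_hasDerivWithinAt_pos (convex_Icc 0 1) hf.contDiffOn.continuousOn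
    (fun x hx => (hf.differentiableOn x (interior_subset hx)).hasDerivWithinAt.mono
      interior_subset)
    fun x hx => hf.deriv_pos x (interior_subset hx)).monotoneOn

theorem card_mul_le_one {x : ℝ} (hx : x ∈ Icc (0 : ℝ) 1) {η : ℝ} {n : ℕ} {S : Finset ℕ}
    (hS : S ⊆ range n) (hη : ∀ k ∈ S, η ≤ |f (f^[k] x) - f^[k] x|) : #S * η ≤ 1 := by
  have hη' : ∀ k ∈ S, η ≤ |f^[k + 1] x - f^[k] x| := by
    simpa only [Function.iterate_succ_apply'] using hη
  have horbit : |f^[n] x - f^[0] x| ≤ 1 :=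
    Real.dist_le_of_mem_Icc_01 (hf.mapsTo.iterate n hx) hx
  refine le_trans ?_ horbit
  rcases le_total x (f x) with h | h
  · exact (hf.monotoneOn.monotone_iterate_of_le_map hf.mapsTo hx h).card_mul_le_abs_sub hS hη'
  · exact (hf.monotoneOn.antitone_iterate_of_map_le hf.mapsTo hx h).card_mul_le_abs_sub hS hη'

theorem exists_derivWithin_iterate_le
    (h1 : ∀ ξ ∈ Icc (0 : ℝ) 1, f ξ = ξ → derivWithin f (Icc 0 1) ξ = 1) {c : ℝ} (hc : 1 < c) :
    ∃ C, ∀ n, ∀ x ∈ Icc (0 : ℝ) 1, derivWithin (f^[n]) (Icc 0 1) x ≤ C * c ^ n := by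
  classical
  have hcont : ContinuousOn (derivWithin f (Icc 0 1)) (Icc 0 1) :=
    hf.contDiffOn.continuousOn_derivWithin (uniqueDiffOn_Icc zero_lt_one) le_rfl
  obtain ⟨B, hB₁, hB⟩ : ∃ B, 1 ≤ B ∧ ∀ y ∈ Icc (0 : ℝ) 1, derivWithin f (Icc 0 1) y ≤ B := by
    obtain ⟨B, hB⟩ := isCompact_Icc.bddAbove_image hcont
    exact ⟨max B 1, le_max_right _ _, fun y hy =>
      (hB (mem_image_of_mem _ hy)).trans (le_max_left _ _)⟩
  set K := {y ∈ Icc (0 : ℝ) 1 | c ≤ derivWithin f (Icc 0 1) y}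
  have hK : IsCompact K := isCompact_Icc.of_isClosed_subset
    (hcont.preimage_isClosed_of_isClosed isClosed_Icc isClosed_Ici) (sep_subset _ _)
  obtain ⟨η, hη, hηK⟩ : ∃ η, 0 < η ∧ ∀ y ∈ K, η ≤ |f y - y| :=
    hK.exists_forall_le'
      ((hf.contDiffOn.continuousOn.mono (sep_subset _ _)).sub continuousOn_id).abs fun y hy =>
        abs_pos.2 (sub_ne_zero.2 fun hfix => by linarith [h1 y hy.1 hfix ▸ hy.2])
  refine ⟨B ^ ⌈1 / η⌉₊, fun n x hx => ?_⟩
  set S := {k ∈ range n | f^[k] x ∈ K}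
  have hS : #S ≤ ⌈1 / η⌉₊ := by
    have : #S * η ≤ 1 :=
      hf.card_mul_le_one hx (filter_subset _ _) fun k hk => hηK _ (mem_filter.1 hk).2
    exact Nat.cast_le.1 (((le_div_iff₀ hη).2 this).trans (Nat.le_ceil _))
  have horbit (k : ℕ) : f^[k] x ∈ Icc (0 : ℝ) 1 := hf.mapsTo.iterate k hx
  calc derivWithin (f^[n]) (Icc 0 1) x = ∏ k ∈ range n, derivWithin f (Icc 0 1) (f^[k] x) :=
        hf.derivWithin_iterate n hx
    _ ≤ B ^ #S * c ^ #(range n) :=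
        prod_le_pow_card_filter_mul_pow (fun k _ => (hf.deriv_pos _ (horbit k)).le)
          (zero_le_one.trans hB₁) (fun k _ _ => hB _ (horbit k))
          (fun k _ hk => le_of_not_ge fun h => hk ⟨horbit k, h⟩) hc.le
    _ ≤ B ^ ⌈1 / η⌉₊ * c ^ n := by
        rw [card_range]
        gcongr

theorem bddAbove_derivWithin_iterate (n : ℕ) :
    BddAbove (Set.range fun x : Icc (0 : ℝ) 1 => derivWithin (f^[n]) (Icc 0 1) x) :=
  image_eq_range _ _ ▸ isCompact_Icc.bddAbove_image
    ((hf.contDiffOn.iterate hf.mapsTo n).continuousOn_derivWithin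
      (uniqueDiffOn_Icc zero_lt_one) le_rfl)

theorem derivWithin_iterate_le_Gamma (n : ℕ) {x : ℝ} (hx : x ∈ Icc (0 : ℝ) 1) :
    derivWithin (f^[n]) (Icc 0 1) x ≤ Gamma f g n :=
  (le_ciSup (hf.bddAbove_derivWithin_iterate n) ⟨x, hx⟩).trans (le_max_left _ _)

theorem pow_derivWithin_le_Gamma {ξ : ℝ} (hξ : ξ ∈ Icc (0 : ℝ) 1) (hfix : f ξ = ξ) (n : ℕ) :
    derivWithin f (Icc 0 1) ξ ^ n ≤ Gamma f g n := by
  have h : derivWithin (f^[n]) (Icc 0 1) ξ = derivWithin f (Icc 0 1) ξ ^ n := by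
    rw [hf.derivWithin_iterate n hξ, prod_congr rfl fun k _ => by rw [Function.iterate_fixed hfix],
      prod_const, card_range]
  exact h ▸ hf.derivWithin_iterate_le_Gamma n hξ

end IsDiff0

/-- `lim Γ_n(f)^{1/n} = 1` if and only if `f'(ξ) = 1` at every fixed point `ξ` of `f`. -/
theorem gamma_eq_one_iff_deriv_eq_one_at_fixed_points (f g : ℝ → ℝ) (hf : IsDiff0 f g) :
    Filter.Tendsto (fun n : ℕ => Gamma f g n ^ (1 / (n : ℝ))) Filter.atTop (nhds 1) ↔
      ∀ ξ ∈ Set.Icc (0:ℝ) 1, f ξ = ξ → derivWithin f (Set.Icc 0 1) ξ = 1 := by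
  constructor
  · intro hlim ξ hξ hfix
    have hpos := hf.deriv_pos ξ hξ
    have hle : derivWithin f (Icc 0 1) ξ ≤ 1 :=
      le_of_pow_le_of_tendsto_rpow_one_div hpos.le (hf.pow_derivWithin_le_Gamma hξ hfix) hlim
    have hge : (derivWithin f (Icc 0 1) ξ)⁻¹ ≤ 1 := by
      rw [← hf.derivWithin_inv_of_apply_eq_self hξ hfix]
      refine le_of_pow_le_of_tendsto_rpow_one_div (hf.symm.deriv_pos ξ hξ).le (fun n => ?_) hlim
      exact Gamma_comm g f n ▸
        hf.symm.pow_derivWithin_le_Gamma hξ (hf.inv_apply_eq_self_of_apply_eq_self hξ hfix) n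
    exact le_antisymm hle ((inv_le_one₀ hpos).1 hge)
  · intro h1
    have h1g (ξ : ℝ) (hξ : ξ ∈ Icc (0 : ℝ) 1) (hfix : g ξ = ξ) :
        derivWithin g (Icc 0 1) ξ = 1 := by
      have hffix := hf.symm.inv_apply_eq_self_of_apply_eq_self hξ hfix
      rw [hf.derivWithin_inv_of_apply_eq_self hξ hffix, h1 ξ hξ hffix, inv_one]
    refine tendsto_rpow_one_div_of_subexponential (fun n => ?_) fun c hc => ?_
    · have h0 : (0 : ℝ) ∈ Icc (0 : ℝ) 1 := left_mem_Icc.2 zero_le_one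
      simpa [h1 0 h0 hf.map_zero] using hf.pow_derivWithin_le_Gamma h0 hf.map_zero n
    · obtain ⟨Cf, hCf⟩ := hf.exists_derivWithin_iterate_le h1 hc
      obtain ⟨Cg, hCg⟩ := hf.symm.exists_derivWithin_iterate_le h1g hc
      refine ⟨max Cf Cg, fun n => Gamma_le (fun x hx => ?_) (fun x hx => ?_)⟩
      · exact (hCf n x hx).trans (by gcongr; exact le_max_left _ _)
      · exact (hCg n x hx).trans (by gcongr; exact le_max_right _ _)
end

section
/- Let f ∈ Diff_0([0,1]) and let x₀ ∈ (0,1) satisfy f(x₀) > x₀. Suppose that the function v(x) = f(x) − x is non-increasing on [x₀, 1]. Set δ_n = f^{n+1}(x₀) − f^{n}(x₀). Then δ_n ≤ 1/n for every n ≥ 1, and consequently Γ_n(f) ≥ δ₀·n for every n ≥ 1. -/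
/-!
The displacements `δₙ = fⁿ⁺¹(x₀) - fⁿ(x₀)` of the orbit of `x₀` are the values of the
non-increasing function `f(x) - x` along an increasing sequence, so they are non-increasing;
as they sum to at most `1`, this gives `n δₙ ≤ 1`. The map `f⁻ⁿ` sends the interval
`[fⁿ(x₀), fⁿ⁺¹(x₀)]`, of length `δₙ ≤ 1/n`, onto `[x₀, f(x₀)]`, of length `δ₀`, so by the mean
value theorem its derivative somewhere reaches `δ₀ / δₙ ≥ δ₀ n`.
-/

open Set

theorem strictMono_iterate_of_mapsTo_of_lt_map {α : Type*} [Preorder α] {f : α → α}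
    {s : Set α} (hf : StrictMonoOn f s) (hs : MapsTo f s s) {x : α} (hx : x ∈ s)
    (hfx : x < f x) : StrictMono fun n => f^[n] x := by
  refine strictMono_nat_of_lt_succ fun n => ?_
  induction n with
  | zero => simpa using hfx
  | succ n ih =>
    have := hf (hs.iterate _ hx) (hs.iterate _ hx) ih
    rwa [← Function.iterate_succ_apply' f n, ← Function.iterate_succ_apply' f (n + 1)] at this

theorem leftInvOn_iterate {α : Type*} {f g : α → α} {s : Set α} (hs : MapsTo f s s)
    (h : LeftInvOn g f s) (n : ℕ) : LeftInvOn g^[n] f^[n] s := by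
  intro x hx
  induction n with
  | zero => rfl
  | succ n ih =>
    rw [Function.iterate_succ_apply g, Function.iterate_succ_apply' f, h (hs.iterate n hx), ih]

theorem contDiffOn_iterate {𝕜 E : Type*} [NontriviallyNormedField 𝕜] [NormedAddCommGroup E]
    [NormedSpace 𝕜 E] {f : E → E} {s : Set E} {k : WithTop ℕ∞} (hf : ContDiffOn 𝕜 k f s)
    (hs : MapsTo f s s) (n : ℕ) : ContDiffOn 𝕜 k f^[n] s := by
  induction n with
  | zero => exact contDiffOn_id
  | succ n ih => exact ih.comp hf hs

theorem antitone_iterate_succ_sub_of_antitoneOn {f : ℝ → ℝ} {t : Set ℝ}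
    (hv : AntitoneOn (fun x => f x - x) t) {x : ℝ} (hmono : Monotone fun n => f^[n] x)
    (hmem : ∀ n, f^[n] x ∈ t) : Antitone fun n => f^[n + 1] x - f^[n] x := by
  intro m n hmn
  simpa only [Function.iterate_succ_apply'] using hv (hmem m) (hmem n) (hmono hmn)

theorem nat_mul_sub_le_sub_zero_of_antitone {u : ℕ → ℝ} (h : Antitone fun n => u (n + 1) - u n)
    (n : ℕ) : n * (u (n + 1) - u n) ≤ u n - u 0 :=
  calc (n : ℝ) * (u (n + 1) - u n)
      = ∑ _k ∈ Finset.range n, (u (n + 1) - u n) := by simp [mul_sub]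
    _ ≤ ∑ k ∈ Finset.range n, (u (k + 1) - u k) :=
        Finset.sum_le_sum fun k hk => h (Finset.mem_range.mp hk).le
    _ = u n - u 0 := Finset.sum_range_sub u n

theorem derivWithin_le_iSup_of_contDiffOn {h : ℝ → ℝ} {a b : ℝ}
    (hh : ContDiffOn ℝ 1 h (Icc a b)) (hab : a < b) {c : ℝ} (hc : c ∈ Icc a b) :
    derivWithin h (Icc a b) c ≤ ⨆ x : Icc a b, derivWithin h (Icc a b) x := by
  have hbdd := isCompact_Icc.bddAbove_image
    (hh.continuousOn_derivWithin (uniqueDiffOn_Icc hab) le_rfl)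
  rw [image_eq_range] at hbdd
  exact le_ciSup hbdd ⟨c, hc⟩

theorem slope_le_iSup_derivWithin {h : ℝ → ℝ} {a b : ℝ} (hh : ContDiffOn ℝ 1 h (Icc a b))
    {x y : ℝ} (hx : x ∈ Icc a b) (hy : y ∈ Icc a b) (hxy : x < y) :
    (h y - h x) / (y - x) ≤ ⨆ z : Icc a b, derivWithin h (Icc a b) z := by
  have hnhds : ∀ z ∈ Ioo x y, Icc a b ∈ nhds z := fun z hz =>
    Icc_mem_nhds (hx.1.trans_lt hz.1) (hz.2.trans_le hy.2)
  have hsub : Icc x y ⊆ Icc a b := Icc_subset_Icc hx.1 hy.2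
  have hdiff : DifferentiableOn ℝ h (Ioo x y) := fun z hz =>
    ((hh.differentiableOn one_ne_zero z (hsub (Ioo_subset_Icc_self hz))).differentiableAt
      (hnhds z hz)).differentiableWithinAt
  obtain ⟨c, hc, hslope⟩ := exists_deriv_eq_slope h hxy (hh.continuousOn.mono hsub) hdiff
  rw [← hslope, ← derivWithin_of_mem_nhds (hnhds c hc)]
  exact derivWithin_le_iSup_of_contDiffOn hh ((hx.1.trans_lt hxy).trans_le hy.2)
    (hsub (Ioo_subset_Icc_self hc))

theorem IsDiff0.strictMonoOn {f g : ℝ → ℝ} (hf : IsDiff0 f g) : StrictMonoOn f (Icc 0 1) := by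
  refine strictMonoOn_of_deriv_pos (convex_Icc 0 1) hf.contDiffOn.continuousOn fun x hx => ?_
  rw [interior_Icc] at hx
  rw [← derivWithin_of_mem_nhds (Icc_mem_nhds hx.1 hx.2)]
  exact hf.deriv_pos x (Ioo_subset_Icc_self hx)

/-- If `v(x) = f(x) - x` is non-increasing on `[x₀, 1]` and `f(x₀) > x₀`, then
`δ_n = f^{n+1}(x₀) - f^n(x₀) ≤ 1/n` and `Γ_n(f) ≥ δ₀ · n` for all `n ≥ 1`. -/
theorem linear_growth_of_monotone_displacement (f g : ℝ → ℝ) (hf : IsDiff0 f g)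
    (x₀ : ℝ) (hx₀ : x₀ ∈ Set.Ioo (0:ℝ) 1) (hfx₀ : f x₀ > x₀)
    (hv : ∀ x ∈ Set.Icc x₀ 1, ∀ y ∈ Set.Icc x₀ 1, x ≤ y → f y - y ≤ f x - x) :
    ∀ n : ℕ, 1 ≤ n →
      f^[n+1] x₀ - f^[n] x₀ ≤ 1 / (n : ℝ) ∧
      (f x₀ - x₀) * (n : ℝ) ≤ Gamma f g n := by
  intro n hn
  have hx₀I : x₀ ∈ Icc (0 : ℝ) 1 := Ioo_subset_Icc_self hx₀
  have horbit := strictMono_iterate_of_mapsTo_of_lt_map hf.strictMonoOn hf.mapsTo hx₀I hfx₀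
  have hmem : ∀ k, f^[k] x₀ ∈ Icc (0 : ℝ) 1 := fun k => hf.mapsTo.iterate k hx₀I
  have hδ : (n : ℝ) * (f^[n + 1] x₀ - f^[n] x₀) ≤ 1 := by
    have hanti := antitone_iterate_succ_sub_of_antitoneOn hv horbit.monotone
      fun k => ⟨by simpa using horbit.monotone k.zero_le, (hmem k).2⟩
    have := nat_mul_sub_le_sub_zero_of_antitone (u := (f^[·] x₀)) hanti n
    rw [Function.iterate_zero_apply] at this
    linarith [(hmem n).2, hx₀.1]
  have hpos : 0 < f^[n + 1] x₀ - f^[n] x₀ := sub_pos.mpr (horbit n.lt_succ_self)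
  have hinv := leftInvOn_iterate hf.mapsTo hf.left_inv n
  have hslope := slope_le_iSup_derivWithin (contDiffOn_iterate hf.contDiffOn_inv hf.mapsTo_inv n)
    (hmem n) (hmem (n + 1)) (horbit n.lt_succ_self)
  rw [hinv hx₀I, Function.iterate_succ_apply, hinv (hf.mapsTo hx₀I)] at hslope
  refine ⟨by rw [le_div_iff₀ (by exact_mod_cast hn)]; linarith, ?_⟩
  calc (f x₀ - x₀) * n ≤ (f x₀ - x₀) / (f^[n + 1] x₀ - f^[n] x₀) := by
        rw [le_div_iff₀ hpos, mul_assoc]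
        exact mul_le_of_le_one_right (sub_pos.mpr hfx₀).le hδ
    _ ≤ Gamma f g n := hslope.trans (le_max_right _ _)
end

section
/- Let C > 0, D = √(C/2), and define h_j = 2·log(D·j + 1) for j ≥ 0. Then for every j ≥ 1, 2h_j − h_{j−1} − h_{j+1} > C·e^{−h_j}; that is, {h_j} is a super-solution of the difference equation L_j p = C·e^{−p_j}, where L_j p = 2p_j − p_{j−1} − p_{j+1}. -/
/-! With `x = D (j + 1) + 1` the three terms are `2 log (x - D)`, `2 log x`, `2 log (x + D)`, and
`C e^{-h_{j+1}} = C / x² = 2 D² / x²`. Strict concavity of `log` in the form `log y < y - 1`,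
applied to `y = (x - D)(x + D) / x² = 1 - D² / x²`, gives
`2 log x - log (x - D) - log (x + D) > D² / x²`. -/

open Real

theorem Real.sq_div_sq_lt_two_mul_log_sub_log_sub_log {x d : ℝ} (hd : d ≠ 0) (hdx : |d| < x) :
    d ^ 2 / x ^ 2 < 2 * log x - log (x - d) - log (x + d) := by
  have hx : 0 < x := (abs_nonneg d).trans_lt hdx
  have hsub : 0 < x - d := by linarith [le_abs_self d]
  have hadd : 0 < x + d := by linarith [neg_abs_le d]
  have hy : (x - d) * (x + d) / x ^ 2 = 1 - d ^ 2 / x ^ 2 := by field_simp; ring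
  have hlog : log ((x - d) * (x + d) / x ^ 2) = log (x - d) + log (x + d) - 2 * log x := by
    rw [log_div (by positivity) (by positivity), log_mul hsub.ne' hadd.ne', log_pow]
    push_cast
    ring
  have hgap : 0 < d ^ 2 / x ^ 2 := by positivity
  have hlt := log_lt_sub_one_of_pos (x := (x - d) * (x + d) / x ^ 2) (by positivity)
    (by rw [hy]; linarith)
  rw [hlog, hy] at hlt
  linarith

theorem Real.exp_neg_two_mul_log {x : ℝ} (hx : 0 < x) : exp (-(2 * log x)) = (x ^ 2)⁻¹ := by
  rw [exp_neg, ← Nat.cast_ofNat, ← log_pow, exp_log (by positivity)]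

/-- The sequence `h_j = 2 log(D j + 1)`, `D = √(C/2)`, is a super-solution of the
difference equation `2p_j - p_{j-1} - p_{j+1} = C e^{-p_j}`: for every `j ≥ 1`,
`2h_j - h_{j-1} - h_{j+1} > C e^{-h_j}`. -/
theorem h_is_supersolution (C : ℝ) (hC : 0 < C) (h : ℕ → ℝ)
    (hh : ∀ j : ℕ, h j = 2 * Real.log (Real.sqrt (C / 2) * (j : ℝ) + 1)) :
    ∀ j : ℕ, 2 * h (j+1) - h j - h (j+2) > C * Real.exp (-(h (j+1))) := by
  intro j
  set D := √(C / 2)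
  have hD : 0 < D := sqrt_pos.mpr (by positivity)
  have hDsq : D ^ 2 = C / 2 := sq_sqrt (by positivity)
  set x := D * (j + 1) + 1 with hx
  have hDx : |D| < x := by
    rw [abs_of_pos hD, hx]; nlinarith [mul_nonneg hD.le (Nat.cast_nonneg (α := ℝ) j)]
  have hconcave := sq_div_sq_lt_two_mul_log_sub_log_sub_log hD.ne' hDx
  have hprev : h j = 2 * log (x - D) := by rw [hh, hx]; ring_nf
  have hcur : h (j + 1) = 2 * log x := by rw [hh, hx]; push_cast; rfl
  have hnext : h (j + 2) = 2 * log (x + D) := by rw [hh, hx]; push_cast; ring_nf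
  rw [hprev, hcur, hnext, exp_neg_two_mul_log (by positivity),
    show C = 2 * D ^ 2 by rw [hDsq]; ring]
  rw [← div_eq_mul_inv, mul_div_assoc]
  linarith
end

section
/- (Maximum principle) Let C > 0, D = √(C/2), h_j = 2·log(D·j + 1), and let {a_j}_{j≥0} be a real sequence with a₀ = 0 satisfying 2a_n − a_{n−1} − a_{n+1} ≤ C·e^{−a_n} for all n ≥ 1. Fix ε ≥ 0 and set b_j = a_j − (1+ε)·h_j. Then {b_j} has no positive local maximum: for every i ≥ 1, if b_i ≥ b_{i−1} and b_i ≥ b_{i+1}, then b_i ≤ 0. -/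
/-!
The sequence `h_j = 2 log (D j + 1)` is a super-solution: concavity of `log`, in the form
`log (1 - D² / v²) ≤ -D² / v²` with `v = D (j + 1) + 1`, gives `L h ≥ 2 D² e^{-h} = C e^{-h}`.
At a positive local maximum of `b = a - (1 + ε) h` we would have `a > h ≥ 0`, hence
`L a ≥ (1 + ε) L h ≥ L h ≥ C e^{-h} > C e^{-a}`, contradicting the sub-solution inequality.
-/

open Real

/-- `secondDiff p n` is the paper's `L_{n+1} p`. -/
def secondDiff (p : ℕ → ℝ) (n : ℕ) : ℝ := 2 * p (n + 1) - p n - p (n + 2)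

theorem secondDiff_nonneg {p : ℕ → ℝ} {n : ℕ} (h₁ : p n ≤ p (n + 1))
    (h₂ : p (n + 2) ≤ p (n + 1)) : 0 ≤ secondDiff p n := by
  unfold secondDiff
  linarith

theorem secondDiff_sub_mul (p q : ℕ → ℝ) (c : ℝ) (n : ℕ) :
    secondDiff (fun j => p j - c * q j) n = secondDiff p n - c * secondDiff q n := by
  unfold secondDiff
  ring

theorem sq_div_sq_le_two_mul_log_sub_log_sub_log {D v : ℝ} (h : |D| < v) :
    D ^ 2 / v ^ 2 ≤ 2 * log v - log (v - D) - log (v + D) := by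
  obtain ⟨hneg, hpos⟩ := abs_lt.1 h
  have hv : 0 < v := (abs_nonneg D).trans_lt h
  have hsub : 0 < v - D := by linarith
  have hadd : 0 < v + D := by linarith
  have hlog : log ((v - D) * (v + D) / v ^ 2) = log (v - D) + log (v + D) - 2 * log v := by
    rw [log_div (by positivity) (by positivity), log_mul hsub.ne' hadd.ne', log_pow]
    push_cast
    ring
  have hquot : (v - D) * (v + D) / v ^ 2 - 1 = -(D ^ 2 / v ^ 2) := by
    field_simp
    ring
  have := log_le_sub_one_of_pos (show 0 < (v - D) * (v + D) / v ^ 2 by positivity)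
  rw [hlog, hquot] at this
  linarith

noncomputable def logSuperSolution (D : ℝ) (j : ℕ) : ℝ := 2 * log (D * j + 1)

theorem logSuperSolution_nonneg {D : ℝ} (hD : 0 ≤ D) (j : ℕ) : 0 ≤ logSuperSolution D j := by
  unfold logSuperSolution
  have : 0 ≤ D * j := by positivity
  have := log_nonneg (show 1 ≤ D * j + 1 by linarith)
  linarith

theorem two_mul_sq_mul_exp_neg_le_secondDiff_logSuperSolution {D : ℝ} (hD : 0 ≤ D) (n : ℕ) :
    2 * D ^ 2 * exp (-logSuperSolution D (n + 1)) ≤ secondDiff (logSuperSolution D) n := by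
  set v : ℝ := D * (n + 1) + 1
  have hv : |D| < v := by
    rw [abs_of_nonneg hD]
    nlinarith [(n.cast_nonneg : (0 : ℝ) ≤ n)]
  have hexp : exp (-logSuperSolution D (n + 1)) = 1 / v ^ 2 := by
    have : logSuperSolution D (n + 1) = log (v ^ 2) := by
      rw [logSuperSolution, log_pow]
      push_cast
      rfl
    rw [this, exp_neg, exp_log (by positivity), one_div]
  have hL : secondDiff (logSuperSolution D) n
      = 2 * (2 * log v - log (v - D) - log (v + D)) := by
    simp only [secondDiff, logSuperSolution, v]
    push_cast
    ring_nf
  rw [hexp, hL]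
  have := sq_div_sq_le_two_mul_log_sub_log_sub_log hv
  rw [div_eq_mul_one_div] at this
  linarith

theorem nonpos_of_localMax_of_subSolution_of_superSolution {C ε : ℝ} {a h b : ℕ → ℝ} {n : ℕ} (hC : 0 < C)
    (hε : 0 ≤ ε) (hb : ∀ j, b j = a j - (1 + ε) * h j)
    (ha : secondDiff a n ≤ C * exp (-a (n + 1)))
    (hh : C * exp (-h (n + 1)) ≤ secondDiff h n) (hh₀ : 0 ≤ h (n + 1))
    (h₁ : b n ≤ b (n + 1)) (h₂ : b (n + 2) ≤ b (n + 1)) : b (n + 1) ≤ 0 := by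
  by_contra! hpos
  have hb' : b = fun j => a j - (1 + ε) * h j := funext hb
  have hLb : 0 ≤ secondDiff b n := secondDiff_nonneg h₁ h₂
  rw [hb', secondDiff_sub_mul] at hLb
  have hLh : 0 ≤ secondDiff h n := (by positivity : 0 ≤ C * exp (-h (n + 1))).trans hh
  have hah : h (n + 1) < a (n + 1) := by
    rw [hb] at hpos
    linarith [le_mul_of_one_le_left hh₀ (by linarith : 1 ≤ 1 + ε)]
  have hexp : C * exp (-a (n + 1)) < C * exp (-h (n + 1)) :=
    mul_lt_mul_of_pos_left (exp_lt_exp.2 (neg_lt_neg hah)) hC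
  linarith [le_mul_of_one_le_left hLh (by linarith : 1 ≤ 1 + ε)]

theorem no_positive_local_maximum_general (C : ℝ) (hC : 0 < C) (a : ℕ → ℝ)
    (ha : ∀ n : ℕ, 2 * a (n+1) - a n - a (n+2) ≤ C * Real.exp (-(a (n+1))))
    (ε : ℝ) (hε : 0 ≤ ε) (b : ℕ → ℝ)
    (hb : ∀ j : ℕ, b j = a j - (1 + ε) * (2 * Real.log (Real.sqrt (C / 2) * (j : ℝ) + 1))) :
    ∀ i : ℕ, b i ≤ b (i+1) → b (i+2) ≤ b (i+1) → b (i+1) ≤ 0 := by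
  intro i h₁ h₂
  have hD : 0 ≤ √(C / 2) := sqrt_nonneg _
  have hDC : 2 * √(C / 2) ^ 2 = C := by
    rw [sq_sqrt (by positivity)]
    ring
  have hh := two_mul_sq_mul_exp_neg_le_secondDiff_logSuperSolution hD i
  rw [hDC] at hh
  exact nonpos_of_localMax_of_subSolution_of_superSolution hC hε hb (ha i) hh
    (logSuperSolution_nonneg hD (i + 1)) h₁ h₂

/-- Maximum principle: let `a₀ = 0` and `2a_n - a_{n-1} - a_{n+1} ≤ C e^{-a_n}` for all
`n ≥ 1`, let `ε ≥ 0`, and set `b_j = a_j - (1+ε) h_j` with `h_j = 2 log(√(C/2) j + 1)`.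
Then `b` has no positive local maximum: if `i ≥ 1`, `b_i ≥ b_{i-1}` and `b_i ≥ b_{i+1}`,
then `b_i ≤ 0`. -/
theorem no_positive_local_maximum (C : ℝ) (hC : 0 < C) (a : ℕ → ℝ) (ha0 : a 0 = 0)
    (ha : ∀ n : ℕ, 2 * a (n+1) - a n - a (n+2) ≤ C * Real.exp (-(a (n+1))))
    (ε : ℝ) (hε : 0 ≤ ε) (b : ℕ → ℝ)
    (hb : ∀ j : ℕ, b j = a j - (1 + ε) * (2 * Real.log (Real.sqrt (C / 2) * (j : ℝ) + 1))) :
    ∀ i : ℕ, b i ≤ b (i+1) → b (i+2) ≤ b (i+1) → b (i+1) ≤ 0 :=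
  no_positive_local_maximum_general C hC a ha ε hε b hb
end

section
/- Let Δ : ℝ → (0,∞) be a C^∞ function such that Δ(t) → 0 as |t| → ∞, and such that for every integer m ≥ 1 and every c ∈ [0,1), max_{s∈[t,t+1]} |Δ^{(m)}(s)| / Δ(t)^{m+c} → 0 as |t| → ∞. Define g₀(t) = Δ(t+1)/Δ(t) and g_{m+1}(t) = g_m'(t)/Δ(t). Then g₀(t) → 1 and, for every integer m ≥ 1, g_m(t) → 0 as |t| → ∞. -/
open Filter Real Set intervalIntegral

namespace AsymReg

variable (Δ : ℝ → ℝ)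

inductive MonIn : (ℝ → ℝ) → ℤ → Prop
  | inv : MonIn (fun x => (Δ x)⁻¹) (-1)
  | der (c : ℕ) (hc : 1 ≤ c) : MonIn (fun x => iteratedDeriv c Δ x) (c + 1)
  | mul {f g : ℝ → ℝ} {a b : ℤ} : MonIn f a → MonIn g b → MonIn (fun x => f x * g x) (a + b)

inductive SpI (w : ℤ) : (ℝ → ℝ) → Prop
  | mon {f} : MonIn Δ f w → SpI w f
  | smul (c : ℝ) {f} : SpI w f → SpI w (fun x => c * f x)
  | add {f g} : SpI w f → SpI w g → SpI w (fun x => f x + g x)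

inductive Mon : (ℝ → ℝ) → ℤ → Prop
  | inv : Mon (fun t => (Δ t)⁻¹) (-1)
  | der (c : ℕ) (hc : 1 ≤ c) : Mon (fun t => iteratedDeriv c Δ t) (c + 1)
  | intg {W : ℝ → ℝ} {w : ℤ} : MonIn Δ W w → Mon (fun t => ∫ s in (0:ℝ)..1, W (t + s)) w
  | mul {f g : ℝ → ℝ} {a b : ℤ} : Mon f a → Mon g b → Mon (fun t => f t * g t) (a + b)

inductive SpO (w : ℤ) : (ℝ → ℝ) → Prop
  | mon {f} : Mon Δ f w → SpO w f
  | smul (c : ℝ) {f} : SpO w f → SpO w (fun x => c * f x)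
  | add {f g} : SpO w f → SpO w g → SpO w (fun x => f x + g x)

inductive Good : (ℝ → ℝ) → Prop
  | base {f w} (hw : 1 ≤ w) : SpO Δ w f → Good f
  | add {f g} : Good f → Good g → Good (fun t => f t + g t)

variable {Δ}

lemma MonIn.wcast {f a b} (h : MonIn Δ f a) (e : a = b) : MonIn Δ f b := e ▸ h
lemma SpI.wcast {f a b} (h : SpI Δ a f) (e : a = b) : SpI Δ b f := e ▸ h
lemma Mon.wcast {f a b} (h : Mon Δ f a) (e : a = b) : Mon Δ f b := e ▸ h
lemma SpO.wcast {f a b} (h : SpO Δ a f) (e : a = b) : SpO Δ b f := e ▸ h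
lemma SpI.fcongr {f g w} (h : SpI Δ w f) (e : ∀ x, g x = f x) : SpI Δ w g :=
  (funext e : g = f) ▸ h
lemma SpO.fcongr {f g w} (h : SpO Δ w f) (e : ∀ x, g x = f x) : SpO Δ w g :=
  (funext e : g = f) ▸ h
lemma Good.fcongr {f g} (h : Good Δ f) (e : ∀ x, g x = f x) : Good Δ g :=
  (funext e : g = f) ▸ h

lemma SpI.mulMonR {h g : ℝ → ℝ} {w b : ℤ} (hh : SpI Δ w h) (hg : MonIn Δ g b) :
    SpI Δ (w + b) (fun x => h x * g x) := by
  induction hh with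
  | mon hm => exact SpI.mon (hm.mul hg)
  | smul c h ih => exact (ih.smul c).fcongr (fun x => by ring)
  | add hf hg' ihf ihg => exact (ihf.add ihg).fcongr (fun x => by ring)

lemma SpI.mulMonL {h g : ℝ → ℝ} {w a : ℤ} (hg : MonIn Δ g a) (hh : SpI Δ w h) :
    SpI Δ (a + w) (fun x => g x * h x) :=
  ((hh.mulMonR hg).wcast (by ring)).fcongr (fun x => by ring)

lemma SpO.mulMonR {h g : ℝ → ℝ} {w b : ℤ} (hh : SpO Δ w h) (hg : Mon Δ g b) :
    SpO Δ (w + b) (fun x => h x * g x) := by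
  induction hh with
  | mon hm => exact SpO.mon (hm.mul hg)
  | smul c h ih => exact (ih.smul c).fcongr (fun x => by ring)
  | add hf hg' ihf ihg => exact (ihf.add ihg).fcongr (fun x => by ring)

lemma SpO.mul {f g : ℝ → ℝ} {a b : ℤ} (hf : SpO Δ a f) (hg : SpO Δ b g) :
    SpO Δ (a + b) (fun x => f x * g x) := by
  induction hg with
  | mon hm => exact hf.mulMonR hm
  | smul c h ih => exact (ih.smul c).fcongr (fun x => by ring)
  | add h1 h2 ih1 ih2 => exact (ih1.add ih2).fcongr (fun x => by ring)

section Struct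

variable (hpos : ∀ t, 0 < Δ t) (hsmooth : ContDiff ℝ (⊤ : ℕ∞) Δ)

include hsmooth in
lemma diff_iter (n : ℕ) : Differentiable ℝ (iteratedDeriv n Δ) :=
  hsmooth.differentiable_iteratedDeriv n (by exact_mod_cast ENat.coe_lt_top n)

include hsmooth in
lemma diffΔ : Differentiable ℝ Δ := hsmooth.differentiable (by simp)

include hpos hsmooth in
lemma MonIn.diff {f w} (h : MonIn Δ f w) : Differentiable ℝ f := by
  induction h with
  | inv => exact (diffΔ hsmooth).inv (fun x => (hpos x).ne')
  | der c hc => exact diff_iter hsmooth c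
  | mul hf hg ihf ihg => exact ihf.mul ihg

include hpos hsmooth in
lemma SpI.diff {f w} (h : SpI Δ w f) : Differentiable ℝ f := by
  induction h with
  | mon hm => exact hm.diff hpos hsmooth
  | smul c h ih => exact ih.const_mul c
  | add hf hg ihf ihg => exact ihf.add ihg

include hpos hsmooth in
lemma MonIn.derivSpan {f w} (h : MonIn Δ f w) : SpI Δ (w + 1) (deriv f) := by
  induction h with
  | inv =>
      have e : deriv (fun x => (Δ x)⁻¹)
          = fun x => (-1 : ℝ) * (iteratedDeriv 1 Δ x * ((Δ x)⁻¹ * (Δ x)⁻¹)) := by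
        funext x
        have hd : HasDerivAt Δ (deriv Δ x) x := (diffΔ hsmooth x).hasDerivAt
        rw [deriv_fun_inv'' (diffΔ hsmooth x) (hpos x).ne', iteratedDeriv_one, pow_two, div_eq_mul_inv, mul_inv]
        ring
      rw [e]
      exact SpI.smul (-1) (SpI.mon
        (((MonIn.der 1 le_rfl).mul (MonIn.inv.mul MonIn.inv)).wcast (by norm_num)))
  | der c hc =>
      rw [show deriv (fun x => iteratedDeriv c Δ x) = fun x => iteratedDeriv (c+1) Δ x from
        by rw [← iteratedDeriv_succ]]
      exact (SpI.mon (MonIn.der (c+1) (by omega))).wcast (by push_cast; ring)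
  | mul hf hg ihf ihg =>
      rename_i f g a b
      have e : deriv (fun x => f x * g x) = fun x => deriv f x * g x + f x * deriv g x := by
        funext x
        exact deriv_mul ((hf.diff hpos hsmooth) x) ((hg.diff hpos hsmooth) x)
      rw [e]
      exact ((ihf.mulMonR hg).wcast (by ring)).add ((SpI.mulMonL hf ihg).wcast (by ring))

include hpos hsmooth in
lemma SpI.derivSpan {f w} (h : SpI Δ w f) : SpI Δ (w + 1) (deriv f) := by
  induction h with
  | mon hm => exact hm.derivSpan hpos hsmooth
  | smul c h ih =>
      rename_i f
      have e : deriv (fun x => c * f x) = fun x => c * deriv f x := by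
        funext x; exact deriv_const_mul c ((h.diff hpos hsmooth) x)
      rw [e]; exact ih.smul c
  | add h1 h2 ih1 ih2 =>
      rename_i f g
      have e : deriv (fun x => f x + g x) = fun x => deriv f x + deriv g x := by
        funext x; exact deriv_add ((h1.diff hpos hsmooth) x) ((h2.diff hpos hsmooth) x)
      rw [e]; exact ih1.add ih2


end Struct

section Integrals

lemma shift_hasDerivAt {W : ℝ → ℝ} (hW : Continuous W) (t : ℝ) :
    HasDerivAt (fun u => ∫ s in (0:ℝ)..1, W (u + s)) (W (t+1) - W t) t := by
  set F : ℝ → ℝ := fun x => ∫ σ in (0:ℝ)..x, W σ with hF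
  have key : ∀ u : ℝ, ∫ s in (0:ℝ)..1, W (u + s) = F (u+1) - F u := by
    intro u
    have h1 : ∫ s in (0:ℝ)..1, W (u + s) = ∫ σ in u..(u+1), W σ := by
      simpa using intervalIntegral.integral_comp_add_left W u
    rw [h1, ← intervalIntegral.integral_interval_sub_left
      (hW.intervalIntegrable 0 (u+1)) (hW.intervalIntegrable 0 u)]
  have hFd : ∀ x : ℝ, HasDerivAt F (W x) x := fun x =>
    intervalIntegral.integral_hasDerivAt_right (hW.intervalIntegrable 0 x)
      (hW.stronglyMeasurableAtFilter _ _) hW.continuousAt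
  have h2 : HasDerivAt (fun u : ℝ => F (u+1)) (W (t+1)) t := by
    simpa [Function.comp_def] using (hFd (t+1)).comp t ((hasDerivAt_id t).add_const 1)
  have h3 := h2.sub (hFd t)
  rw [show (fun u => ∫ s in (0:ℝ)..1, W (u + s)) = fun u => F (u+1) - F u from funext key]
  exact h3

lemma integral_deriv_shift {g : ℝ → ℝ} (hg : Differentiable ℝ g) (hg' : Continuous (deriv g))
    (t : ℝ) : ∫ s in (0:ℝ)..1, deriv g (t + s) = g (t+1) - g t := by
  have h1 : ∫ s in (0:ℝ)..1, deriv g (t + s) = ∫ σ in t..(t+1), deriv g σ := by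
    simpa using intervalIntegral.integral_comp_add_left (deriv g) t
  rw [h1, intervalIntegral.integral_deriv_eq_sub (fun x _ => hg x)
    (hg'.intervalIntegrable _ _)]

variable (hpos : ∀ t, 0 < Δ t) (hsmooth : ContDiff ℝ (⊤ : ℕ∞) Δ)

include hpos hsmooth in
lemma SpI.cont {f w} (h : SpI Δ w f) : Continuous f := (h.diff hpos hsmooth).continuous

include hpos hsmooth in
lemma SpI.intg {W : ℝ → ℝ} {w : ℤ} (h : SpI Δ w W) :
    SpO Δ w (fun t => ∫ s in (0:ℝ)..1, W (t + s)) := by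
  induction h with
  | mon hm => exact SpO.mon (Mon.intg hm)
  | smul c h ih =>
      refine (ih.smul c).fcongr (fun t => ?_)
      exact intervalIntegral.integral_const_mul c _
  | add h1 h2 ih1 ih2 =>
      rename_i f g
      refine (ih1.add ih2).fcongr (fun t => ?_)
      exact intervalIntegral.integral_add
        (((h1.cont hpos hsmooth).comp (continuous_const.add continuous_id)).intervalIntegrable _ _)
        (((h2.cont hpos hsmooth).comp (continuous_const.add continuous_id)).intervalIntegrable _ _)

include hpos hsmooth in
lemma Mon.diff {f w} (h : Mon Δ f w) : Differentiable ℝ f := by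
  induction h with
  | inv => exact (diffΔ hsmooth).inv (fun x => (hpos x).ne')
  | der c hc => exact diff_iter hsmooth c
  | intg hW => exact fun t => (shift_hasDerivAt ((hW.diff hpos hsmooth).continuous) t).differentiableAt
  | mul hf hg ihf ihg => exact ihf.mul ihg

include hpos hsmooth in
lemma SpO.diff {f w} (h : SpO Δ w f) : Differentiable ℝ f := by
  induction h with
  | mon hm => exact hm.diff hpos hsmooth
  | smul c h ih => exact ih.const_mul c
  | add hf hg ihf ihg => exact ihf.add ihg

include hpos hsmooth in
lemma Mon.derivSpan {f w} (h : Mon Δ f w) : SpO Δ (w + 1) (deriv f) := by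
  induction h with
  | inv =>
      have e : deriv (fun x => (Δ x)⁻¹)
          = fun x => (-1 : ℝ) * (iteratedDeriv 1 Δ x * ((Δ x)⁻¹ * (Δ x)⁻¹)) := by
        funext x
        have hd : HasDerivAt Δ (deriv Δ x) x := (diffΔ hsmooth x).hasDerivAt
        rw [deriv_fun_inv'' (diffΔ hsmooth x) (hpos x).ne', iteratedDeriv_one, pow_two, div_eq_mul_inv, mul_inv]
        ring
      rw [e]
      exact SpO.smul (-1) (SpO.mon
        (((Mon.der 1 le_rfl).mul (Mon.inv.mul Mon.inv)).wcast (by norm_num)))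
  | der c hc =>
      rw [show deriv (fun x => iteratedDeriv c Δ x) = fun x => iteratedDeriv (c+1) Δ x from
        by rw [← iteratedDeriv_succ]]
      exact (SpO.mon (Mon.der (c+1) (by omega))).wcast (by push_cast; ring)
  | intg hW =>
      rename_i W w'
      have hWd := hW.diff hpos hsmooth
      have hW' := hW.derivSpan hpos hsmooth
      have e : deriv (fun t => ∫ s in (0:ℝ)..1, W (t + s))
          = fun t => ∫ s in (0:ℝ)..1, deriv W (t + s) := by
        funext t
        rw [(shift_hasDerivAt hWd.continuous t).deriv,
          integral_deriv_shift hWd (hW'.cont hpos hsmooth) t]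
      rw [e]
      exact hW'.intg hpos hsmooth
  | mul hf hg ihf ihg =>
      rename_i f g a b
      have e : deriv (fun x => f x * g x) = fun x => deriv f x * g x + f x * deriv g x := by
        funext x
        exact deriv_mul ((hf.diff hpos hsmooth) x) ((hg.diff hpos hsmooth) x)
      rw [e]
      exact ((ihf.mulMonR hg).wcast (by ring)).add
        (((SpO.mon hf).mul ihg).wcast (by ring))

include hpos hsmooth in
lemma SpO.derivSpan {f w} (h : SpO Δ w f) : SpO Δ (w + 1) (deriv f) := by
  induction h with
  | mon hm => exact hm.derivSpan hpos hsmooth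
  | smul c h ih =>
      rename_i f
      have e : deriv (fun x => c * f x) = fun x => c * deriv f x := by
        funext x; exact deriv_const_mul c ((h.diff hpos hsmooth) x)
      rw [e]; exact ih.smul c
  | add h1 h2 ih1 ih2 =>
      rename_i f g
      have e : deriv (fun x => f x + g x) = fun x => deriv f x + deriv g x := by
        funext x; exact deriv_add ((h1.diff hpos hsmooth) x) ((h2.diff hpos hsmooth) x)
      rw [e]; exact ih1.add ih2

include hpos hsmooth in
lemma Good.diff {f} (h : Good Δ f) : Differentiable ℝ f := by
  induction h with
  | base hw hsp => exact hsp.diff hpos hsmooth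
  | add h1 h2 ih1 ih2 => exact ih1.add ih2

include hpos hsmooth in
lemma Good.mul {f g} (hf : Good Δ f) (hg : Good Δ g) : Good Δ (fun t => f t * g t) := by
  induction hf with
  | base hw hsp =>
      induction hg with
      | base hw' hsp' => exact Good.base (by omega) (hsp.mul hsp')
      | add h1 h2 ih1 ih2 => exact (ih1.add ih2).fcongr (fun t => by ring)
  | add h1 h2 ih1 ih2 => exact (ih1.add ih2).fcongr (fun t => by ring)

include hpos hsmooth in
lemma Good.D {f} (h : Good Δ f) : Good Δ (fun t => deriv f t / Δ t) := by
  induction h with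
  | base hw hsp =>
      refine Good.base hw ((((hsp.derivSpan hpos hsmooth).mul (SpO.mon Mon.inv)).wcast
        (by ring)).fcongr (fun t => ?_))
      rw [div_eq_mul_inv]
  | add h1 h2 ih1 ih2 =>
      rename_i f g
      refine (ih1.add ih2).fcongr (fun t => ?_)
      rw [deriv_fun_add ((h1.diff hpos hsmooth) t) ((h2.diff hpos hsmooth) t), add_div]

end Integrals

section Analytic

variable (Δ) in
noncomputable def Sup (m : ℕ) (t : ℝ) : ℝ := ⨆ s : Set.Icc t (t+1), |iteratedDeriv m Δ (s : ℝ)|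

variable (hpos : ∀ t, 0 < Δ t) (hsmooth : ContDiff ℝ (⊤ : ℕ∞) Δ)
  (hzero : Filter.Tendsto Δ (Filter.cocompact ℝ) (nhds 0))
  (hder : ∀ m : ℕ, 1 ≤ m → ∀ c ∈ Set.Ico (0:ℝ) 1,
      Filter.Tendsto
        (fun t : ℝ => (⨆ s : Set.Icc t (t+1), |iteratedDeriv m Δ (s : ℝ)|) / Δ t ^ ((m : ℝ) + c))
        (Filter.cocompact ℝ) (nhds 0))

include hsmooth in
lemma bddSup (m : ℕ) (t : ℝ) :
    BddAbove (Set.range fun s : Set.Icc t (t+1) => |iteratedDeriv m Δ (s : ℝ)|) := by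
  rw [show (fun s : Set.Icc t (t+1) => |iteratedDeriv m Δ (s:ℝ)|)
      = (fun x => |iteratedDeriv m Δ x|) ∘ (Subtype.val) from rfl,
    Set.range_comp, Subtype.range_coe]
  exact isCompact_Icc.bddAbove_image ((diff_iter hsmooth m).continuous.abs.continuousOn)

include hsmooth in
lemma le_Sup (m : ℕ) {t σ : ℝ} (hσ : σ ∈ Set.Icc t (t+1)) :
    |iteratedDeriv m Δ σ| ≤ Sup Δ m t :=
  le_ciSup (bddSup hsmooth m t) (⟨σ, hσ⟩ : Set.Icc t (t+1))

lemma Sup_nonneg (m : ℕ) (t : ℝ) : 0 ≤ Sup Δ m t :=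
  Real.iSup_nonneg (fun s => abs_nonneg _)

include hpos hder in
lemma Sup_tendsto (c : ℕ) (hc : 1 ≤ c) {δ : ℝ} (hδ : δ ∈ Set.Ioc (0:ℝ) 1) :
    Filter.Tendsto (fun t => Sup Δ c t * Δ t ^ (δ - ((c:ℝ)+1)))
      (Filter.cocompact ℝ) (nhds 0) := by
  obtain ⟨hδ0, hδ1⟩ := hδ
  have h := hder c hc (1 - δ) ⟨by linarith, by linarith⟩
  refine h.congr (fun t => ?_)
  have e : δ - ((c:ℝ)+1) = -((c:ℝ) + (1-δ)) := by ring
  rw [e, Real.rpow_neg (hpos t).le, ← div_eq_mul_inv]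
  simp only [Sup]

include hpos hsmooth in
lemma mvt (t : ℝ) {σ : ℝ} (hσ : σ ∈ Set.Icc t (t+1)) : |Δ σ - Δ t| ≤ Sup Δ 1 t := by
  have hd : ∀ x ∈ Set.Icc t (t+1), DifferentiableAt ℝ Δ x := fun x _ => diffΔ hsmooth x
  have hb : ∀ x ∈ Set.Icc t (t+1), ‖deriv Δ x‖ ≤ Sup Δ 1 t := by
    intro x hx
    rw [Real.norm_eq_abs, show deriv Δ x = iteratedDeriv 1 Δ x from by rw [iteratedDeriv_one]]
    exact le_Sup hsmooth 1 hx
  have ht : t ∈ Set.Icc t (t+1) := ⟨le_refl _, by linarith⟩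
  have := Convex.norm_image_sub_le_of_norm_deriv_le hd hb (convex_Icc _ _) ht hσ
  rw [Real.norm_eq_abs, Real.norm_eq_abs] at this
  have h1 : |σ - t| ≤ 1 := by
    rw [abs_of_nonneg (by linarith [hσ.1])]
    linarith [hσ.2]
  calc |Δ σ - Δ t| ≤ Sup Δ 1 t * |σ - t| := this
    _ ≤ Sup Δ 1 t * 1 := by
        exact mul_le_mul_of_nonneg_left h1 (Sup_nonneg 1 t)
    _ = Sup Δ 1 t := mul_one _

include hpos hder in
lemma Sup1_small : ∀ᶠ t in Filter.cocompact ℝ, Sup Δ 1 t ≤ Δ t / 2 := by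
  have h := hder 1 le_rfl 0 ⟨le_rfl, one_pos⟩
  have h' : Filter.Tendsto (fun t => Sup Δ 1 t / Δ t) (Filter.cocompact ℝ) (nhds 0) := by
    refine h.congr (fun t => ?_)
    simp only [Sup, Nat.cast_one, add_zero, Real.rpow_one]
  filter_upwards [h'.eventually_lt_const (by norm_num : (0:ℝ) < 1/2)] with t ht
  have := (div_lt_iff₀ (hpos t)).mp ht
  linarith

include hpos hsmooth hder in
lemma delta_lower : ∀ᶠ t in Filter.cocompact ℝ,
    ∀ σ ∈ Set.Icc t (t+1), Δ t / 2 ≤ Δ σ := by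
  filter_upwards [Sup1_small hpos hder] with t ht σ hσ
  have h1 := mvt hpos hsmooth t hσ
  have := abs_le.mp (h1.trans ht)
  linarith [this.1]

include hzero in
lemma delta_le_one : ∀ᶠ t in Filter.cocompact ℝ, Δ t ≤ 1 := by
  filter_upwards [hzero.eventually_lt_const (by norm_num : (0:ℝ) < 1)] with t ht
  linarith

include hpos hzero in
lemma rpow_tendsto {d : ℝ} (hd : 0 < d) :
    Filter.Tendsto (fun t => Δ t ^ d) (Filter.cocompact ℝ) (nhds 0) := by
  have : Filter.Tendsto (fun x : ℝ => x ^ d) (nhds 0) (nhds 0) := by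
    have := (Real.continuousAt_rpow_const 0 d (Or.inr hd.le)).tendsto
    simpa [Real.zero_rpow hd.ne'] using this
  exact this.comp hzero

end Analytic

section Bounds

variable (Δ) in
def IB (w : ℤ) (W : ℝ → ℝ) : Prop := ∀ δ ∈ Set.Ioc (0:ℝ) 1, ∃ ε : ℝ → ℝ,
  Filter.Tendsto ε (Filter.cocompact ℝ) (nhds 0) ∧ (∀ t, 0 ≤ ε t) ∧
  ∀ᶠ t in Filter.cocompact ℝ, ∀ σ ∈ Set.Icc t (t+1), |W σ| ≤ ε t * Δ t ^ ((w:ℝ) - δ)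

variable (Δ) in
def OB (w : ℤ) (f : ℝ → ℝ) : Prop := ∀ δ ∈ Set.Ioc (0:ℝ) 1, ∃ ε : ℝ → ℝ,
  Filter.Tendsto ε (Filter.cocompact ℝ) (nhds 0) ∧ (∀ t, 0 ≤ ε t) ∧
  ∀ᶠ t in Filter.cocompact ℝ, |f t| ≤ ε t * Δ t ^ ((w:ℝ) - δ)

variable (hpos : ∀ t, 0 < Δ t) (hsmooth : ContDiff ℝ (⊤ : ℕ∞) Δ)
  (hzero : Filter.Tendsto Δ (Filter.cocompact ℝ) (nhds 0))
  (hder : ∀ m : ℕ, 1 ≤ m → ∀ c ∈ Set.Ico (0:ℝ) 1,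
      Filter.Tendsto
        (fun t : ℝ => (⨆ s : Set.Icc t (t+1), |iteratedDeriv m Δ (s : ℝ)|) / Δ t ^ ((m : ℝ) + c))
        (Filter.cocompact ℝ) (nhds 0))

include hpos hsmooth hzero hder in
lemma MonIn_IB {W : ℝ → ℝ} {w : ℤ} (h : MonIn Δ W w) : IB Δ w W := by
  induction h with
  | inv =>
      rintro δ ⟨hδ0, hδ1⟩
      refine ⟨fun t => 2 * Δ t ^ δ, by simpa using (rpow_tendsto hpos hzero hδ0).const_mul 2,
        fun t => mul_nonneg (by norm_num) (Real.rpow_nonneg (hpos t).le _), ?_⟩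
      filter_upwards [delta_lower hpos hsmooth hder] with t ht σ hσ
      have hσpos := hpos σ
      have e : 2 * Δ t ^ δ * Δ t ^ ((((-1:ℤ)):ℝ) - δ) = 2 * (Δ t)⁻¹ := by
        have e1 : ((((-1:ℤ)):ℝ) - δ) = -1 - δ := by push_cast; ring
        rw [e1, show (2:ℝ) * Δ t ^ δ * Δ t ^ (-1 - δ)
            = 2 * (Δ t ^ δ * Δ t ^ (-1-δ)) from by ring,
          ← Real.rpow_add (hpos t), show δ + (-1 - δ) = -1 from by ring, Real.rpow_neg_one]
      rw [e, abs_of_pos (inv_pos.mpr hσpos)]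
      calc (Δ σ)⁻¹ ≤ (Δ t / 2)⁻¹ := by
            apply inv_anti₀ (by linarith [hpos t]) (ht σ hσ)
        _ = 2 * (Δ t)⁻¹ := by rw [inv_div, div_eq_mul_inv]
  | der c hc =>
      rintro δ ⟨hδ0, hδ1⟩
      refine ⟨fun t => Sup Δ c t * Δ t ^ (δ - ((c:ℝ)+1)),
        Sup_tendsto hpos hder c hc ⟨hδ0, hδ1⟩,
        fun t => mul_nonneg (Sup_nonneg c t) (Real.rpow_nonneg (hpos t).le _), ?_⟩
      refine Filter.Eventually.of_forall (fun t σ hσ => ?_)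
      have e : Sup Δ c t * Δ t ^ (δ - ((c:ℝ)+1)) * Δ t ^ ((((c:ℤ)+1 : ℤ):ℝ) - δ) = Sup Δ c t := by
        rw [mul_assoc, ← Real.rpow_add (hpos t),
          show (δ - ((c:ℝ)+1)) + ((((c:ℤ)+1 : ℤ):ℝ) - δ) = 0 from by push_cast; ring,
          Real.rpow_zero, mul_one]
      show |iteratedDeriv c Δ σ| ≤ Sup Δ c t * Δ t ^ (δ - ((c:ℝ)+1)) * Δ t ^ ((((c:ℤ)+1 : ℤ):ℝ) - δ)
      rw [e]
      exact le_Sup hsmooth c hσ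
  | mul hf hg ihf ihg =>
      rename_i f g a b
      rintro δ ⟨hδ0, hδ1⟩
      obtain ⟨ε₁, T₁, N₁, B₁⟩ := ihf (δ/2) ⟨by linarith, by linarith⟩
      obtain ⟨ε₂, T₂, N₂, B₂⟩ := ihg (δ/2) ⟨by linarith, by linarith⟩
      refine ⟨fun t => ε₁ t * ε₂ t, by simpa using T₁.mul T₂,
        fun t => mul_nonneg (N₁ t) (N₂ t), ?_⟩
      filter_upwards [B₁, B₂] with t h1 h2 σ hσ
      calc |f σ * g σ| = |f σ| * |g σ| := abs_mul _ _
        _ ≤ (ε₁ t * Δ t ^ ((a:ℝ) - δ/2)) * (ε₂ t * Δ t ^ ((b:ℝ) - δ/2)) :=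
            mul_le_mul (h1 σ hσ) (h2 σ hσ) (abs_nonneg _)
              (mul_nonneg (N₁ t) (Real.rpow_nonneg (hpos t).le _))
        _ = (ε₁ t * ε₂ t) * (Δ t ^ ((a:ℝ) - δ/2) * Δ t ^ ((b:ℝ) - δ/2)) := by ring
        _ = ε₁ t * ε₂ t * Δ t ^ (((a+b:ℤ):ℝ) - δ) := by
            rw [← Real.rpow_add (hpos t),
              show ((a:ℝ) - δ/2) + ((b:ℝ) - δ/2) = ((a+b:ℤ):ℝ) - δ from by push_cast; ring]

include hpos hsmooth hzero hder in
lemma Mon_OB {f : ℝ → ℝ} {w : ℤ} (h : Mon Δ f w) : OB Δ w f := by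
  induction h with
  | inv =>
      rintro δ ⟨hδ0, hδ1⟩
      refine ⟨fun t => Δ t ^ δ, rpow_tendsto hpos hzero hδ0,
        fun t => Real.rpow_nonneg (hpos t).le _, ?_⟩
      refine Filter.Eventually.of_forall (fun t => ?_)
      have e : Δ t ^ δ * Δ t ^ ((((-1:ℤ)):ℝ) - δ) = (Δ t)⁻¹ := by
        rw [show ((((-1:ℤ)):ℝ) - δ) = -1 - δ from by push_cast; ring,
          ← Real.rpow_add (hpos t), show δ + (-1 - δ) = -1 from by ring, Real.rpow_neg_one]
      rw [e, abs_of_pos (inv_pos.mpr (hpos t))]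
  | der c hc =>
      rintro δ ⟨hδ0, hδ1⟩
      refine ⟨fun t => Sup Δ c t * Δ t ^ (δ - ((c:ℝ)+1)),
        Sup_tendsto hpos hder c hc ⟨hδ0, hδ1⟩,
        fun t => mul_nonneg (Sup_nonneg c t) (Real.rpow_nonneg (hpos t).le _), ?_⟩
      refine Filter.Eventually.of_forall (fun t => ?_)
      have e : Sup Δ c t * Δ t ^ (δ - ((c:ℝ)+1)) * Δ t ^ ((((c:ℤ)+1 : ℤ):ℝ) - δ) = Sup Δ c t := by
        rw [mul_assoc, ← Real.rpow_add (hpos t),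
          show (δ - ((c:ℝ)+1)) + ((((c:ℤ)+1 : ℤ):ℝ) - δ) = 0 from by push_cast; ring,
          Real.rpow_zero, mul_one]
      show |iteratedDeriv c Δ t| ≤ Sup Δ c t * Δ t ^ (δ - ((c:ℝ)+1)) * Δ t ^ ((((c:ℤ)+1 : ℤ):ℝ) - δ)
      rw [e]
      exact le_Sup hsmooth c ⟨le_refl t, by linarith⟩
  | intg hW =>
      rename_i W w'
      rintro δ hδ
      obtain ⟨ε, T, N, B⟩ := MonIn_IB hpos hsmooth hzero hder hW δ hδ
      refine ⟨ε, T, N, ?_⟩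
      filter_upwards [B] with t hB
      have key : ‖∫ s in (0:ℝ)..1, W (t+s)‖ ≤ (ε t * Δ t ^ ((w':ℝ) - δ)) * |1 - 0| := by
        apply intervalIntegral.norm_integral_le_of_norm_le_const
        intro x hx
        rw [Set.uIoc_of_le (by norm_num : (0:ℝ) ≤ 1)] at hx
        have hmem : t + x ∈ Set.Icc t (t+1) := ⟨by linarith [hx.1], by linarith [hx.2]⟩
        rw [Real.norm_eq_abs]
        exact hB _ hmem
      rw [Real.norm_eq_abs] at key
      simpa using key
  | mul hf hg ihf ihg =>
      rename_i f g a b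
      rintro δ ⟨hδ0, hδ1⟩
      obtain ⟨ε₁, T₁, N₁, B₁⟩ := ihf (δ/2) ⟨by linarith, by linarith⟩
      obtain ⟨ε₂, T₂, N₂, B₂⟩ := ihg (δ/2) ⟨by linarith, by linarith⟩
      refine ⟨fun t => ε₁ t * ε₂ t, by simpa using T₁.mul T₂,
        fun t => mul_nonneg (N₁ t) (N₂ t), ?_⟩
      filter_upwards [B₁, B₂] with t h1 h2
      calc |f t * g t| = |f t| * |g t| := abs_mul _ _
        _ ≤ (ε₁ t * Δ t ^ ((a:ℝ) - δ/2)) * (ε₂ t * Δ t ^ ((b:ℝ) - δ/2)) :=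
            mul_le_mul h1 h2 (abs_nonneg _)
              (mul_nonneg (N₁ t) (Real.rpow_nonneg (hpos t).le _))
        _ = (ε₁ t * ε₂ t) * (Δ t ^ ((a:ℝ) - δ/2) * Δ t ^ ((b:ℝ) - δ/2)) := by ring
        _ = ε₁ t * ε₂ t * Δ t ^ (((a+b:ℤ):ℝ) - δ) := by
            rw [← Real.rpow_add (hpos t),
              show ((a:ℝ) - δ/2) + ((b:ℝ) - δ/2) = ((a+b:ℤ):ℝ) - δ from by push_cast; ring]

include hpos hsmooth hzero hder in
lemma SpO_OB {f : ℝ → ℝ} {w : ℤ} (h : SpO Δ w f) : OB Δ w f := by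
  induction h with
  | mon hm => exact Mon_OB hpos hsmooth hzero hder hm
  | smul c h ih =>
      rename_i f
      rintro δ hδ
      obtain ⟨ε, T, N, B⟩ := ih δ hδ
      refine ⟨fun t => |c| * ε t, by simpa using T.const_mul |c|,
        fun t => mul_nonneg (abs_nonneg c) (N t), ?_⟩
      filter_upwards [B] with t hB
      calc |c * f t| = |c| * |f t| := abs_mul _ _
        _ ≤ |c| * (ε t * Δ t ^ ((w:ℝ) - δ)) := mul_le_mul_of_nonneg_left hB (abs_nonneg c)
        _ = |c| * ε t * Δ t ^ ((w:ℝ) - δ) := by ring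
  | add h1 h2 ih1 ih2 =>
      rename_i f g
      rintro δ hδ
      obtain ⟨ε₁, T₁, N₁, B₁⟩ := ih1 δ hδ
      obtain ⟨ε₂, T₂, N₂, B₂⟩ := ih2 δ hδ
      refine ⟨fun t => ε₁ t + ε₂ t, by simpa using T₁.add T₂,
        fun t => add_nonneg (N₁ t) (N₂ t), ?_⟩
      filter_upwards [B₁, B₂] with t h1' h2'
      calc |f t + g t| ≤ |f t| + |g t| := abs_add_le _ _
        _ ≤ ε₁ t * Δ t ^ ((w:ℝ) - δ) + ε₂ t * Δ t ^ ((w:ℝ) - δ) := add_le_add h1' h2'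
        _ = (ε₁ t + ε₂ t) * Δ t ^ ((w:ℝ) - δ) := by ring

include hpos hsmooth hzero hder in
lemma SpO_tendsto {f : ℝ → ℝ} {w : ℤ} (hw : 1 ≤ w) (h : SpO Δ w f) :
    Filter.Tendsto f (Filter.cocompact ℝ) (nhds 0) := by
  obtain ⟨ε, T, N, B⟩ := SpO_OB hpos hsmooth hzero hder h 1 ⟨zero_lt_one, le_rfl⟩
  have hb : ∀ᶠ t in Filter.cocompact ℝ, |f t| ≤ ε t := by
    filter_upwards [B, delta_le_one hzero] with t h1 h2
    have hw' : (0:ℝ) ≤ (w:ℝ) - 1 := by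
      have : (1:ℝ) ≤ (w:ℝ) := by exact_mod_cast hw
      linarith
    calc |f t| ≤ ε t * Δ t ^ ((w:ℝ) - 1) := h1
      _ ≤ ε t * 1 := mul_le_mul_of_nonneg_left (Real.rpow_le_one (hpos t).le h2 hw') (N t)
      _ = ε t := mul_one _
  have : Filter.Tendsto (fun t => |f t|) (Filter.cocompact ℝ) (nhds 0) :=
    squeeze_zero' (Filter.Eventually.of_forall (fun t => abs_nonneg _)) hb T
  rw [tendsto_zero_iff_abs_tendsto_zero]
  exact this

include hpos hsmooth hzero hder in
lemma Good_tendsto {f : ℝ → ℝ} (h : Good Δ f) :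
    Filter.Tendsto f (Filter.cocompact ℝ) (nhds 0) := by
  induction h with
  | base hw hsp => exact SpO_tendsto hpos hsmooth hzero hder hw hsp
  | add h1 h2 ih1 ih2 => simpa using ih1.add ih2

end Bounds

end AsymReg

open AsymReg Filter in
/-- Verification of asymptotic regularity: if `Δ : ℝ → (0,∞)` is `C^∞` with `Δ(t) → 0`
as `|t| → ∞` and `max_{[t,t+1]} |Δ^{(m)}| / Δ(t)^{m+c} → 0` as `|t| → ∞` for every
`m ≥ 1` and `c ∈ [0,1)`, then `g₀(t) → 1` and `g_m(t) → 0` (`m ≥ 1`) as `|t| → ∞`,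
where `g₀ = Δ(·+1)/Δ` and `g_{m+1} = g_m'/Δ`. -/
theorem g_limits_of_asymptotic_regularity (Δ : ℝ → ℝ) (hpos : ∀ t, 0 < Δ t)
    (hsmooth : ContDiff ℝ (⊤ : ℕ∞) Δ)
    (hzero : Filter.Tendsto Δ (Filter.cocompact ℝ) (nhds 0))
    (hder : ∀ m : ℕ, 1 ≤ m → ∀ c ∈ Set.Ico (0:ℝ) 1,
      Filter.Tendsto
        (fun t : ℝ => (⨆ s : Set.Icc t (t+1), |iteratedDeriv m Δ (s : ℝ)|) / Δ t ^ ((m : ℝ) + c))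
        (Filter.cocompact ℝ) (nhds 0))
    (G : ℕ → ℝ → ℝ) (hG0 : ∀ t, G 0 t = Δ (t + 1) / Δ t)
    (hGs : ∀ m t, G (m+1) t = deriv (G m) t / Δ t) :
    Filter.Tendsto (G 0) (Filter.cocompact ℝ) (nhds 1) ∧
    ∀ m : ℕ, 1 ≤ m → Filter.Tendsto (G m) (Filter.cocompact ℝ) (nhds 0) := by
  -- the function v = Δ'/Δ
  set v : ℝ → ℝ := fun x => iteratedDeriv 1 Δ x * (Δ x)⁻¹ with hv_def
  have hv : MonIn Δ v 1 := ((MonIn.der 1 le_rfl).mul MonIn.inv).wcast (by norm_num)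
  have hvdiff : Differentiable ℝ v := hv.diff hpos hsmooth
  have hv' : SpI Δ 2 (deriv v) := (hv.derivSpan hpos hsmooth).wcast (by norm_num)
  have hvc' : Continuous (deriv v) := hv'.cont hpos hsmooth
  have hFTC : ∀ t, ∫ s in (0:ℝ)..1, deriv v (t + s) = v (t+1) - v t := fun t =>
    integral_deriv_shift hvdiff hvc' t
  set V : ℝ → ℝ := fun t => (Δ t)⁻¹ * ∫ s in (0:ℝ)..1, deriv v (t + s) with hV_def
  have hVgood : Good Δ V :=
    Good.base le_rfl (((SpO.mon Mon.inv).mul (hv'.intg hpos hsmooth)).wcast (by norm_num))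
  have hVt : ∀ t, V t = (Δ t)⁻¹ * (v (t+1) - v t) := by
    intro t; rw [hV_def]; simp only []; rw [hFTC t]
  have hG0f : G 0 = fun t => Δ (t+1) * (Δ t)⁻¹ := funext fun t => by
    rw [hG0 t, div_eq_mul_inv]
  have hG0diff : Differentiable ℝ (G 0) := by
    rw [hG0f]
    exact ((diffΔ hsmooth).comp (differentiable_id.add_const 1)).mul
      ((diffΔ hsmooth).inv (fun x => (hpos x).ne'))
  have hderG0 : ∀ t, deriv (G 0) t = G 0 t * (v (t+1) - v t) := by
    intro t
    have h1 : HasDerivAt (fun u => Δ (u+1)) (deriv Δ (t+1)) t := by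
      simpa [Function.comp_def] using ((diffΔ hsmooth (t+1)).hasDerivAt).comp t ((hasDerivAt_id t).add_const 1)
    have h2 : HasDerivAt (fun u => (Δ u)⁻¹) (-deriv Δ t / Δ t ^ 2) t :=
      ((diffΔ hsmooth t).hasDerivAt).inv (hpos t).ne'
    have h3 : HasDerivAt (G 0) (deriv Δ (t+1) * (Δ t)⁻¹ + Δ (t+1) * (-deriv Δ t / Δ t ^ 2)) t := by
      rw [hG0f]; exact h1.mul h2
    rw [h3.deriv, hG0 t, hv_def]
    simp only [iteratedDeriv_one]
    have ht : Δ t ≠ 0 := (hpos t).ne'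
    have ht1 : Δ (t+1) ≠ 0 := (hpos (t+1)).ne'
    field_simp
    ring
  -- G (m+1) = G 0 * Q with Q Good
  have main : ∀ m : ℕ, ∃ Q : ℝ → ℝ, Good Δ Q ∧ ∀ t, G (m+1) t = G 0 t * Q t := by
    intro m
    induction m with
    | zero =>
        refine ⟨V, hVgood, fun t => ?_⟩
        rw [hGs 0 t, hderG0 t, hVt t]
        rw [div_eq_mul_inv]
        ring
    | succ m ih =>
        obtain ⟨Q, hQ, hGm⟩ := ih
        have hQdiff : Differentiable ℝ Q := hQ.diff hpos hsmooth
        refine ⟨fun t => V t * Q t + deriv Q t / Δ t,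
          Good.add (Good.mul hpos hsmooth hVgood hQ) (Good.D hpos hsmooth hQ), fun t => ?_⟩
        rw [hGs (m+1) t, funext hGm]
        simp only []
        rw [deriv_fun_mul (hG0diff t) (hQdiff t), hderG0 t, hVt t]
        have ht : Δ t ≠ 0 := (hpos t).ne'
        field_simp
  -- part 1 : G 0 → 1
  have hsupdiv : Filter.Tendsto (fun t => AsymReg.Sup Δ 1 t / Δ t) (Filter.cocompact ℝ) (nhds 0) := by
    have h := hder 1 le_rfl 0 ⟨le_rfl, one_pos⟩
    refine h.congr (fun t => ?_)
    simp only [AsymReg.Sup, Nat.cast_one, add_zero, Real.rpow_one]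
  have hG0sub : Filter.Tendsto (fun t => G 0 t - 1) (Filter.cocompact ℝ) (nhds 0) := by
    rw [tendsto_zero_iff_abs_tendsto_zero]
    refine squeeze_zero' (Filter.Eventually.of_forall (fun t => abs_nonneg _))
      (Filter.Eventually.of_forall (fun t => ?_)) hsupdiv
    have hmvt := mvt hpos hsmooth t (⟨by linarith, le_refl (t+1)⟩ : t+1 ∈ Set.Icc t (t+1))
    have e : G 0 t - 1 = (Δ (t+1) - Δ t) / Δ t := by
      rw [hG0 t, sub_div, div_self (hpos t).ne']
    show |G 0 t - 1| ≤ AsymReg.Sup Δ 1 t / Δ t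
    rw [e, abs_div, abs_of_pos (hpos t)]
    exact (div_le_div_iff_of_pos_right (hpos t)).mpr hmvt
  have hG0lim : Filter.Tendsto (G 0) (Filter.cocompact ℝ) (nhds 1) := by
    have := hG0sub.add (tendsto_const_nhds (x := (1:ℝ)))
    simpa using this
  refine ⟨hG0lim, ?_⟩
  intro m hm
  match m, hm with
  | (k+1), _ =>
    obtain ⟨Q, hQ, hGm⟩ := main k
    rw [funext hGm]
    have := hG0lim.mul (Good_tendsto hpos hsmooth hzero hder hQ)
    simpa using this
end

section
/- Let h ∈ Diff_0([0,1]) be a C^∞ diffeomorphism which equals the identity outside the interval [1/3, 2/3], and let B = {x ∈ ℝ^m : |x| ≤ 1} be the closed unit ball. Define g : B → B by g(0) = 0 and g(x) = x·h(|x|)/|x| for x ≠ 0. Then g is a C^∞ diffeomorphism of B equal to the identity on {|x| ≤ 1/3} and on {|x| ≥ 2/3}, and for every n ∈ ℕ, Γ_n(h) ≤ Γ_n(g) ≤ max(2, Γ_n(h)). -/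
open scoped Classical

/-- The growth sequence of a diffeomorphism `g` of the closed unit ball in `ℝ^m`
(with inverse `g'`). -/
noncomputable def GammaB {m : ℕ}
    (g g' : EuclideanSpace ℝ (Fin m) → EuclideanSpace ℝ (Fin m)) (n : ℕ) : ℝ :=
  max (⨆ x : Metric.closedBall (0 : EuclideanSpace ℝ (Fin m)) 1,
        ‖fderivWithin ℝ (g^[n]) (Metric.closedBall 0 1) (x : EuclideanSpace ℝ (Fin m))‖)
      (⨆ x : Metric.closedBall (0 : EuclideanSpace ℝ (Fin m)) 1,
        ‖fderivWithin ℝ (g'^[n]) (Metric.closedBall 0 1) (x : EuclideanSpace ℝ (Fin m))‖)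


open Set Metric Filter Topology
open scoped RealInnerProductSpace

namespace RadExt

lemma eq_self_of_lim {f : ℝ → ℝ} {a c d : ℝ} (hcd : c < d)
    (ha : a ∈ closure (Set.Ioo c d)) (hsub : Set.Ioo c d ⊆ Set.Icc (0:ℝ) 1)
    (cont : ContinuousWithinAt f (Set.Icc (0:ℝ) 1) a)
    (hs : ∀ y ∈ Set.Ioo c d, f y = y) : f a = a := by
  have hne : (𝓝[Set.Ioo c d] a).NeBot := mem_closure_iff_nhdsWithin_neBot.mp ha
  have t1 : Tendsto f (𝓝[Set.Ioo c d] a) (𝓝 (f a)) := cont.mono hsub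
  have t2 : Tendsto f (𝓝[Set.Ioo c d] a) (𝓝 a) := by
    refine Tendsto.congr' ?_ (tendsto_id.mono_left nhdsWithin_le_nhds)
    filter_upwards [self_mem_nhdsWithin] with y hy using (hs y hy).symm
  exact tendsto_nhds_unique t1 t2

/-- Bundled hypotheses. -/
structure Nice (f f' : ℝ → ℝ) : Prop where
  base : IsDiff0 f f'
  smooth : ContDiffOn ℝ (⊤ : ℕ∞) f (Set.Icc 0 1)
  smooth' : ContDiffOn ℝ (⊤ : ℕ∞) f' (Set.Icc 0 1)
  idout : ∀ r ∈ Set.Icc (0:ℝ) 1, r ∉ Set.Icc (1/3:ℝ) (2/3) → f r = r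

variable {f f' : ℝ → ℝ}

lemma Nice.idout' (hf : Nice f f') : ∀ r ∈ Set.Icc (0:ℝ) 1, r ∉ Set.Ioo (1/3:ℝ) (2/3) → f r = r := by
  intro r hr hro
  by_cases hrc : r ∈ Set.Icc (1/3:ℝ) (2/3)
  · -- r = 1/3 or r = 2/3
    have : r = 1/3 ∨ r = 2/3 := by
      rcases hrc with ⟨h1, h2⟩
      rcases eq_or_lt_of_le h1 with h | h
      · exact Or.inl h.symm
      rcases eq_or_lt_of_le h2 with h' | h'
      · exact Or.inr h'
      · exact absurd ⟨h, h'⟩ hro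
    rcases this with rfl | rfl
    · refine eq_self_of_lim (c := 0) (d := 1/3) (by norm_num) ?_ ?_
        (hf.base.contDiffOn.continuousOn.continuousWithinAt hr) ?_
      · rw [closure_Ioo (by norm_num : (0:ℝ) ≠ 1/3)]; constructor <;> norm_num
      · intro y hy; constructor <;> [exact hy.1.le; linarith [hy.2]]
      · intro y hy
        exact hf.idout y ⟨hy.1.le, by linarith [hy.2]⟩ (by intro hc; linarith [hc.1, hy.2])
    · refine eq_self_of_lim (c := 2/3) (d := 1) (by norm_num) ?_ ?_
        (hf.base.contDiffOn.continuousOn.continuousWithinAt hr) ?_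
      · rw [closure_Ioo (by norm_num : (2/3:ℝ) ≠ 1)]; constructor <;> norm_num
      · intro y hy; constructor <;> [linarith [hy.1]; exact hy.2.le]
      · intro y hy
        exact hf.idout y ⟨by linarith [hy.1], hy.2.le⟩ (by intro hc; linarith [hc.2, hy.1])
  · exact hf.idout r hr hrc

lemma Nice.strictMono (hf : Nice f f') : StrictMonoOn f (Set.Icc 0 1) := by
  apply strictMonoOn_of_deriv_pos (convex_Icc 0 1) hf.base.contDiffOn.continuousOn
  intro x hx
  rw [interior_Icc] at hx
  have hmem : Set.Icc (0:ℝ) 1 ∈ 𝓝 x := Icc_mem_nhds hx.1 hx.2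
  rw [← derivWithin_of_mem_nhds hmem]
  exact hf.base.deriv_pos x (Set.mem_Icc.2 ⟨hx.1.le, hx.2.le⟩)

lemma Nice.map_zero' (hf : Nice f f') : f' 0 = 0 := by
  have := hf.base.left_inv 0 (by norm_num)
  rwa [hf.base.map_zero] at this

lemma Nice.symm (hf : Nice f f') : Nice f' f := by
  have dpos : ∀ y ∈ Set.Icc (0:ℝ) 1, 0 < derivWithin f' (Set.Icc 0 1) y := by
    intro y hy
    obtain ⟨x, hx, rfl⟩ : ∃ x ∈ Set.Icc (0:ℝ) 1, f x = y :=
      ⟨f' y, hf.base.mapsTo_inv hy, hf.base.right_inv y hy⟩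
    have hud : UniqueDiffWithinAt ℝ (Set.Icc (0:ℝ) 1) x := uniqueDiffOn_Icc_zero_one x hx
    have hdf : DifferentiableWithinAt ℝ f (Set.Icc 0 1) x :=
      (hf.base.contDiffOn.differentiableOn one_ne_zero) x hx
    have hdf' : DifferentiableWithinAt ℝ f' (Set.Icc 0 1) (f x) :=
      (hf.base.contDiffOn_inv.differentiableOn one_ne_zero) (f x) (hf.base.mapsTo hx)
    have hcomp := derivWithin_comp (s' := Set.Icc (0:ℝ) 1) x hdf' hdf hf.base.mapsTo
    have hid : derivWithin (f' ∘ f) (Set.Icc (0:ℝ) 1) x = 1 := by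
      have : derivWithin (f' ∘ f) (Set.Icc (0:ℝ) 1) x = derivWithin id (Set.Icc (0:ℝ) 1) x := by
        apply derivWithin_congr
        · intro y hy; exact hf.base.left_inv y hy
        · exact hf.base.left_inv x hx
      rw [this, derivWithin_id _ _ hud]
    rw [hid] at hcomp
    have hp := hf.base.deriv_pos x hx
    have : derivWithin f' (Set.Icc (0:ℝ) 1) (f x) = 1 / derivWithin f (Set.Icc 0 1) x := by
      field_simp at hcomp ⊢; linarith [hcomp]
    rw [this]; positivity
  refine ⟨⟨hf.base.mapsTo_inv, hf.base.mapsTo, hf.base.right_inv, hf.base.left_inv,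
    hf.map_zero', ?_, hf.base.contDiffOn_inv, hf.base.contDiffOn, dpos⟩,
    hf.smooth', hf.smooth, ?_⟩
  · have := hf.base.left_inv 1 (by norm_num)
    rwa [hf.base.map_one] at this
  · intro r hr hro
    have h1 : f r = r := hf.idout r hr hro
    have := hf.base.left_inv r hr
    rwa [h1] at this


namespace Nice
variable {f f' : ℝ → ℝ}

lemma mapsTo_iter (hf : Nice f f') (n : ℕ) :
    Set.MapsTo (f^[n]) (Set.Icc 0 1) (Set.Icc (0:ℝ) 1) := hf.base.mapsTo.iterate n

lemma iter_zero_fix (hf : Nice f f') (n : ℕ) : f^[n] 0 = 0 :=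
  Function.iterate_fixed hf.base.map_zero n

lemma idout_iter (hf : Nice f f') (n : ℕ) :
    ∀ r ∈ Set.Icc (0:ℝ) 1, r ∉ Set.Ioo (1/3:ℝ) (2/3) → f^[n] r = r := by
  induction n with
  | zero => simp
  | succ n ih =>
    intro r hr hro
    rw [Function.iterate_succ_apply, hf.idout' r hr hro]
    exact ih r hr hro

lemma strictMono_iter (hf : Nice f f') (n : ℕ) : StrictMonoOn (f^[n]) (Set.Icc 0 1) := by
  induction n with
  | zero => intro a _ b _ hab; simpa using hab
  | succ n ih =>
    intro a ha b hb hab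
    rw [Function.iterate_succ_apply, Function.iterate_succ_apply]
    exact ih (hf.base.mapsTo ha) (hf.base.mapsTo hb) (hf.strictMono ha hb hab)

lemma iter_fix23 (hf : Nice f f') (n : ℕ) : f^[n] (2/3 : ℝ) = 2/3 :=
  hf.idout_iter n _ (by norm_num) (by norm_num)

lemma iter_le_23 (hf : Nice f f') (n : ℕ) :
    ∀ r ∈ Set.Icc (0:ℝ) 1, r ≤ 2/3 → f^[n] r ≤ 2/3 := by
  intro r hr h23
  calc f^[n] r ≤ f^[n] (2/3) :=
        (hf.strictMono_iter n).monotoneOn hr (by constructor <;> norm_num) h23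
  _ = 2/3 := hf.iter_fix23 n

lemma iter_le_two_mul (hf : Nice f f') (n : ℕ) :
    ∀ r ∈ Set.Icc (0:ℝ) 1, f^[n] r ≤ 2 * r := by
  intro r hr
  rcases lt_or_ge r (1/3 : ℝ) with h | h
  · rw [hf.idout_iter n r hr (fun hc => absurd hc.1 (by linarith))]; linarith [hr.1]
  rcases le_or_gt r (2/3:ℝ) with h2 | h2
  · calc f^[n] r ≤ 2/3 := hf.iter_le_23 n r hr h2
      _ ≤ 2 * r := by linarith
  · rw [hf.idout_iter n r hr (fun hc => absurd hc.2 (by linarith))]; linarith [hr.1]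

lemma iter_pos (hf : Nice f f') (n : ℕ) :
    ∀ r ∈ Set.Icc (0:ℝ) 1, 0 < r → 0 < f^[n] r := by
  intro r hr h0
  have := hf.strictMono_iter n (Set.left_mem_Icc.2 zero_le_one) hr h0
  rwa [hf.iter_zero_fix] at this

lemma smooth_iter (hf : Nice f f') (n : ℕ) : ContDiffOn ℝ (⊤ : ℕ∞) (f^[n]) (Set.Icc 0 1) := by
  induction n with
  | zero => simpa using contDiffOn_id
  | succ n ih =>
    rw [Function.iterate_succ]
    exact ih.comp hf.smooth hf.base.mapsTo

lemma diff_iter (hf : Nice f f') (n : ℕ) : DifferentiableOn ℝ (f^[n]) (Set.Icc 0 1) :=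
  (hf.smooth_iter n).differentiableOn (by simp)

lemma derivWithin_iter_pos (hf : Nice f f') (n : ℕ) :
    ∀ r ∈ Set.Icc (0:ℝ) 1, 0 < derivWithin (f^[n]) (Set.Icc 0 1) r := by
  induction n with
  | zero =>
    intro r hr
    rw [show (f^[0] : ℝ → ℝ) = id from rfl, derivWithin_id _ _ (uniqueDiffOn_Icc_zero_one r hr)]
    norm_num
  | succ n ih =>
    intro r hr
    rw [Function.iterate_succ', derivWithin_comp (s' := Set.Icc (0:ℝ) 1) r
      ((hf.base.contDiffOn.differentiableOn one_ne_zero) _ (hf.mapsTo_iter n hr))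
      (hf.diff_iter n r hr) (hf.mapsTo_iter n)]
    exact mul_pos (hf.base.deriv_pos _ (hf.mapsTo_iter n hr)) (ih r hr)

lemma continuousOn_derivWithin_iter (hf : Nice f f') (n : ℕ) :
    ContinuousOn (derivWithin (f^[n]) (Set.Icc 0 1)) (Set.Icc 0 1) :=
  (hf.smooth_iter n).continuousOn_derivWithin uniqueDiffOn_Icc_zero_one (by simp)

lemma bdd_iter (hf : Nice f f') (n : ℕ) :
    BddAbove (Set.range fun r : Set.Icc (0:ℝ) 1 =>
      derivWithin (f^[n]) (Set.Icc 0 1) (r : ℝ)) := by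
  rw [← Set.image_eq_range]
  exact (isCompact_Icc.image_of_continuousOn (hf.continuousOn_derivWithin_iter n)).bddAbove

end Nice

variable {E : Type*} [NormedAddCommGroup E] [InnerProductSpace ℝ E]

lemma hasFDerivAt_norm' {x : E} (hx : x ≠ 0) :
    HasFDerivAt (fun y : E => ‖y‖) (‖x‖⁻¹ • (innerSL ℝ x : E →L[ℝ] ℝ)) x := by
  have hx2 : ⟪x, x⟫ ≠ 0 := fun hc => hx (inner_self_eq_zero.1 hc)
  have h1 : HasFDerivAt (fun y : E => ⟪y, y⟫)
      ((fderivInnerCLM ℝ (x, x)).comp ((ContinuousLinearMap.id ℝ E).prod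
        (ContinuousLinearMap.id ℝ E))) x :=
    (hasFDerivAt_id x).inner ℝ (hasFDerivAt_id x)
  have h2 := (Real.hasDerivAt_sqrt hx2).comp_hasFDerivAt_of_eq x h1 rfl
  have hfun : (fun y : E => ‖y‖) = (Real.sqrt ∘ fun y : E => ⟪y, y⟫) := by
    funext y; exact norm_eq_sqrt_real_inner y
  rw [hfun]
  refine h2.congr_fderiv (Eq.symm ?_)
  ext v
  have hsq : Real.sqrt ⟪x, x⟫ = ‖x‖ := (norm_eq_sqrt_real_inner x).symm
  simp only [ContinuousLinearMap.smul_apply, innerSL_apply_apply, ContinuousLinearMap.coe_comp',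
    Function.comp_apply, ContinuousLinearMap.prod_apply, ContinuousLinearMap.coe_id', id_eq,
    fderivInnerCLM_apply, ContinuousLinearMap.smul_apply, smul_eq_mul, hsq]
  rw [real_inner_comm v x]
  have : ‖x‖ ≠ 0 := norm_ne_zero_iff.2 hx
  field_simp
  ring

noncomputable def radial (φ : ℝ → ℝ) (x : E) : E :=
  if x = 0 then 0 else (φ ‖x‖ / ‖x‖) • x

lemma radial_zero (φ : ℝ → ℝ) : radial φ (0 : E) = 0 := if_pos rfl

lemma radial_apply (φ : ℝ → ℝ) {x : E} (hx : x ≠ 0) :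
    radial φ x = (φ ‖x‖ / ‖x‖) • x := if_neg hx

noncomputable def Dmap (φ : ℝ → ℝ) (d : ℝ) (x : E) : E →L[ℝ] E :=
  (φ ‖x‖ / ‖x‖) • ContinuousLinearMap.id ℝ E
    + ((d - φ ‖x‖ / ‖x‖) / ‖x‖ ^ 2) • ((innerSL ℝ x).smulRight x)

lemma Dmap_apply (φ : ℝ → ℝ) (d : ℝ) (x v : E) :
    Dmap φ d x v = (φ ‖x‖ / ‖x‖) • v
      + (((d - φ ‖x‖ / ‖x‖) / ‖x‖ ^ 2) * ⟪x, v⟫) • x := by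
  simp [Dmap, smul_smul, mul_comm]

lemma hasFDerivWithinAt_radial {φ : ℝ → ℝ} {x : E} {d : ℝ} (hx : x ≠ 0)
    (hd : HasDerivWithinAt φ d (Set.Icc 0 1) ‖x‖) :
    HasFDerivWithinAt (radial φ) (Dmap φ d x) (Metric.closedBall 0 1) x := by
  have hr0 : ‖x‖ ≠ 0 := norm_ne_zero_iff.2 hx
  have hN : HasFDerivWithinAt (fun y : E => ‖y‖) (‖x‖⁻¹ • (innerSL ℝ x))
      (Metric.closedBall 0 1) x := (hasFDerivAt_norm' hx).hasFDerivWithinAt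
  have hmaps : Set.MapsTo (fun y : E => ‖y‖) (Metric.closedBall 0 1) (Set.Icc 0 1) :=
    fun y hy => ⟨norm_nonneg y, mem_closedBall_zero_iff.1 hy⟩
  have hφ : HasFDerivWithinAt (fun y : E => φ ‖y‖) (d • (‖x‖⁻¹ • (innerSL ℝ x)))
      (Metric.closedBall 0 1) x :=
    hd.comp_hasFDerivWithinAt x hN hmaps
  have hinv : HasFDerivWithinAt (fun y : E => (‖y‖)⁻¹)
      ((-(‖x‖ ^ 2)⁻¹) • (‖x‖⁻¹ • (innerSL ℝ x))) (Metric.closedBall 0 1) x :=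
    (hasDerivAt_inv hr0).comp_hasFDerivWithinAt x hN
  have hc := hφ.mul hinv
  have hG := hc.smul (hasFDerivWithinAt_id x (Metric.closedBall 0 1))
  have heq : radial φ =ᶠ[𝓝[Metric.closedBall (0:E) 1] x]
      fun y : E => (φ ‖y‖ * (‖y‖)⁻¹) • y := by
    have hne : ∀ᶠ y in 𝓝 x, y ≠ 0 := eventually_ne_nhds hx
    filter_upwards [nhdsWithin_le_nhds hne] with y hy
    rw [radial_apply φ hy, div_eq_mul_inv]
  have hmain := hG.congr_of_eventuallyEq heq
    (by rw [radial_apply φ hx, div_eq_mul_inv]; rfl)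
  refine hmain.congr_fderiv (Eq.symm ?_)
  ext v
  rw [Dmap_apply]
  simp only [ContinuousLinearMap.add_apply, ContinuousLinearMap.smul_apply,
    ContinuousLinearMap.smulRight_apply, ContinuousLinearMap.id_apply, innerSL_apply_apply,
    smul_eq_mul, Pi.mul_apply]
  rw [← div_eq_mul_inv]
  congr 1
  have hcoef : ((d - φ ‖x‖ / ‖x‖) / ‖x‖ ^ 2 * ⟪x, v⟫)
      = (φ ‖x‖ * (-(‖x‖ ^ 2)⁻¹ * (‖x‖⁻¹ * ⟪x, v⟫))
        + ‖x‖⁻¹ * (d * (‖x‖⁻¹ * ⟪x, v⟫))) := by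
    field_simp
    ring
  rw [hcoef]
  rfl

lemma norm_Dmap_le {φ : ℝ → ℝ} {d : ℝ} {x : E} (hx : x ≠ 0)
    (ha : 0 ≤ φ ‖x‖ / ‖x‖) (hd : 0 ≤ d) :
    ‖Dmap φ d x‖ ≤ max (φ ‖x‖ / ‖x‖) d := by
  set a := φ ‖x‖ / ‖x‖ with ha_def
  set M := max a d with hM_def
  have hM0 : 0 ≤ M := le_trans ha (le_max_left _ _)
  have haM : a ≤ M := le_max_left _ _
  have hdM : d ≤ M := le_max_right _ _
  have hr : (0:ℝ) < ‖x‖ := norm_pos_iff.2 hx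
  apply ContinuousLinearMap.opNorm_le_bound _ hM0
  intro v
  rw [Dmap_apply]
  set t := ⟪x, v⟫ with ht_def
  set c := (d - a) / ‖x‖ ^ 2 * t with hc_def
  have hCS : t ^ 2 ≤ ‖x‖ ^ 2 * ‖v‖ ^ 2 := by
    have h1 := abs_real_inner_le_norm x v
    have h2 : |t| ^ 2 ≤ (‖x‖ * ‖v‖) ^ 2 :=
      pow_le_pow_left₀ (abs_nonneg t) h1 2
    rw [sq_abs] at h2; nlinarith
  have hsq : ‖a • v + c • x‖ ^ 2 ≤ (M * ‖v‖) ^ 2 := by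
    have hexp : ‖a • v + c • x‖ ^ 2
        = a ^ 2 * ‖v‖ ^ 2 + 2 * (a * c * t) + c ^ 2 * ‖x‖ ^ 2 := by
      rw [@norm_add_sq_real]
      rw [real_inner_smul_left, real_inner_smul_right, norm_smul, norm_smul]
      simp only [ht_def, hc_def, real_inner_comm v x, Real.norm_eq_abs, mul_pow, sq_abs]
      ring
    rw [hexp]
    have hX : a ^ 2 * ‖v‖ ^ 2 + 2 * (a * c * t) + c ^ 2 * ‖x‖ ^ 2
        = a ^ 2 * (‖v‖ ^ 2 - t ^ 2 / ‖x‖ ^ 2) + d ^ 2 * (t ^ 2 / ‖x‖ ^ 2) := by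
      rw [hc_def]
      field_simp
      ring
    rw [hX]
    have hs1 : t ^ 2 / ‖x‖ ^ 2 ≤ ‖v‖ ^ 2 := by
      rw [div_le_iff₀ (by positivity)]
      nlinarith
    have hs0 : 0 ≤ t ^ 2 / ‖x‖ ^ 2 := by positivity
    have ha2 : a ^ 2 ≤ M ^ 2 := pow_le_pow_left₀ ha haM 2
    have hd2 : d ^ 2 ≤ M ^ 2 := pow_le_pow_left₀ hd hdM 2
    nlinarith [sub_nonneg.2 hs1]
  calc ‖a • v + c • x‖ = Real.sqrt (‖a • v + c • x‖ ^ 2) := by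
        rw [Real.sqrt_sq (norm_nonneg _)]
    _ ≤ Real.sqrt ((M * ‖v‖) ^ 2) := Real.sqrt_le_sqrt hsq
    _ = M * ‖v‖ := Real.sqrt_sq (by positivity)

lemma norm_mem_Icc {x : E} (hx : x ∈ Metric.closedBall (0:E) 1) : ‖x‖ ∈ Set.Icc (0:ℝ) 1 :=
  ⟨norm_nonneg x, mem_closedBall_zero_iff.1 hx⟩

lemma norm_radial {φ : ℝ → ℝ} (hφ0 : φ 0 = 0) {x : E} (hφnn : 0 ≤ φ ‖x‖) :
    ‖radial φ x‖ = φ ‖x‖ := by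
  by_cases hx : x = 0
  · subst hx; rw [radial_zero]; simp [hφ0]
  · have hr : (0:ℝ) < ‖x‖ := norm_pos_iff.2 hx
    rw [radial_apply φ hx, norm_smul, Real.norm_eq_abs,
      abs_of_nonneg (div_nonneg hφnn hr.le), div_mul_cancel₀ _ hr.ne']

lemma radial_eq_self {φ : ℝ → ℝ} {x : E} (hx0 : φ 0 = 0) (hfix : φ ‖x‖ = ‖x‖) :
    radial φ x = x := by
  by_cases hx : x = 0
  · subst hx; rw [radial_zero]
  · rw [radial_apply φ hx, hfix, div_self (norm_ne_zero_iff.2 hx), one_smul]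

lemma radial_small {φ : ℝ → ℝ}
    (hidφ : ∀ r ∈ Set.Icc (0:ℝ) 1, r ∉ Set.Ioo (1/3:ℝ) (2/3) → φ r = r) :
    ∀ x : E, ‖x‖ ≤ 1/3 → radial φ x = x := by
  intro x hx
  refine radial_eq_self (hidφ 0 (by norm_num) (by norm_num)) ?_
  exact hidφ _ ⟨norm_nonneg x, by linarith⟩ (fun hc => by linarith [hc.1])

lemma radial_big {φ : ℝ → ℝ}
    (hidφ : ∀ r ∈ Set.Icc (0:ℝ) 1, r ∉ Set.Ioo (1/3:ℝ) (2/3) → φ r = r) :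
    ∀ x ∈ Metric.closedBall (0:E) 1, (2/3 : ℝ) ≤ ‖x‖ → radial φ x = x := by
  intro x hx h23
  refine radial_eq_self (hidφ 0 (by norm_num) (by norm_num)) ?_
  exact hidφ _ (norm_mem_Icc hx) (fun hc => by linarith [hc.2])

lemma contDiffOn_radial {φ : ℝ → ℝ} (hsm : ContDiffOn ℝ (⊤ : ℕ∞) φ (Set.Icc 0 1))
    (hidφ : ∀ r ∈ Set.Icc (0:ℝ) 1, r ∉ Set.Ioo (1/3:ℝ) (2/3) → φ r = r) :
    ContDiffOn ℝ (⊤ : ℕ∞) (radial φ) (Metric.closedBall (0:E) 1) := by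
  intro x hx
  by_cases hx0 : x = 0
  · subst hx0
    have hid : ContDiffWithinAt ℝ (⊤ : ℕ∞) (id : E → E) (Metric.closedBall 0 1) 0 :=
      contDiffWithinAt_id
    refine hid.congr_of_eventuallyEq ?_ ?_
    · have hball : ∀ᶠ y in 𝓝 (0:E), ‖y‖ < 1/3 := by
        filter_upwards [Metric.ball_mem_nhds (0:E) (by norm_num : (0:ℝ) < 1/3)] with y hy
        exact mem_ball_zero_iff.1 hy
      filter_upwards [nhdsWithin_le_nhds hball] with y hy
      exact radial_small hidφ y hy.le
    · exact radial_zero φ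
  · have hr : ‖x‖ ∈ Set.Icc (0:ℝ) 1 := norm_mem_Icc hx
    have hN : ContDiffWithinAt ℝ (⊤ : ℕ∞) (fun y : E => ‖y‖) (Metric.closedBall 0 1) x :=
      (contDiffAt_norm ℝ hx0).contDiffWithinAt
    have hmaps : Set.MapsTo (fun y : E => ‖y‖) (Metric.closedBall (0:E) 1)
        (Set.Icc (0:ℝ) 1) := fun y hy => norm_mem_Icc hy
    have h1 : ContDiffWithinAt ℝ (⊤ : ℕ∞) (fun y : E => φ ‖y‖) (Metric.closedBall 0 1) x :=
      (hsm.contDiffWithinAt hr).comp x hN hmaps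
    have h2 : ContDiffWithinAt ℝ (⊤ : ℕ∞) (fun y : E => (‖y‖)⁻¹) (Metric.closedBall 0 1) x :=
      ((contDiffAt_inv ℝ (norm_ne_zero_iff.2 hx0)).comp x
        (contDiffAt_norm ℝ hx0)).contDiffWithinAt
    have h3 : ContDiffWithinAt ℝ (⊤ : ℕ∞) (fun y : E => (φ ‖y‖ * (‖y‖)⁻¹) • y)
        (Metric.closedBall 0 1) x := (h1.mul h2).smul contDiffWithinAt_id
    refine h3.congr_of_eventuallyEq ?_ ?_
    · filter_upwards [nhdsWithin_le_nhds (eventually_ne_nhds hx0)] with y hy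
      rw [radial_apply φ hy, div_eq_mul_inv]
    · rw [radial_apply φ hx0, div_eq_mul_inv]

variable {f f' : ℝ → ℝ}

lemma Nice.norm_radial' (hf : Nice f f') {x : E} (hx : x ∈ Metric.closedBall (0:E) 1) :
    ‖radial f x‖ = f ‖x‖ :=
  norm_radial hf.base.map_zero (hf.base.mapsTo (norm_mem_Icc hx)).1

lemma Nice.radial_mapsTo (hf : Nice f f') :
    Set.MapsTo (radial f) (Metric.closedBall (0:E) 1) (Metric.closedBall (0:E) 1) := by
  intro x hx
  rw [mem_closedBall_zero_iff, hf.norm_radial' hx]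
  exact (hf.base.mapsTo (norm_mem_Icc hx)).2

lemma Nice.f_pos (hf : Nice f f') {r : ℝ} (hr : r ∈ Set.Icc (0:ℝ) 1) (h0 : 0 < r) :
    0 < f r := by
  have := hf.strictMono (Set.left_mem_Icc.2 zero_le_one) hr h0
  rwa [hf.base.map_zero] at this

lemma Nice.radial_ne_zero (hf : Nice f f') {x : E} (hx : x ∈ Metric.closedBall (0:E) 1)
    (hx0 : x ≠ 0) : radial f x ≠ 0 := by
  rw [← norm_ne_zero_iff, hf.norm_radial' hx]
  exact (hf.f_pos (norm_mem_Icc hx) (norm_pos_iff.2 hx0)).ne'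

lemma Nice.radial_comp (hf : Nice f f') :
    ∀ x ∈ Metric.closedBall (0:E) 1, radial f' (radial f x) = x := by
  intro x hx
  by_cases hx0 : x = 0
  · subst hx0; rw [radial_zero, radial_zero]
  · have hr : ‖x‖ ∈ Set.Icc (0:ℝ) 1 := norm_mem_Icc hx
    have hrpos : (0:ℝ) < ‖x‖ := norm_pos_iff.2 hx0
    have hfr : 0 < f ‖x‖ := hf.f_pos hr hrpos
    have hy0 : radial f x ≠ 0 := hf.radial_ne_zero hx hx0
    rw [radial_apply f' hy0, hf.norm_radial' hx, radial_apply f hx0, smul_smul,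
      hf.base.left_inv ‖x‖ hr]
    rw [show ‖x‖ / f ‖x‖ * (f ‖x‖ / ‖x‖) = 1 by field_simp, one_smul]

lemma Nice.radial_iter (hf : Nice f f') (n : ℕ) :
    ∀ x ∈ Metric.closedBall (0:E) 1, (radial f)^[n] x = radial (f^[n]) x := by
  induction n with
  | zero =>
    intro x hx
    simp only [Function.iterate_zero, id_eq]
    exact (radial_eq_self rfl rfl).symm
  | succ n ih =>
    intro x hx
    rw [Function.iterate_succ_apply, ih _ (hf.radial_mapsTo hx)]
    by_cases hx0 : x = 0
    · subst hx0; rw [radial_zero, radial_zero, radial_zero]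
    · have hr : ‖x‖ ∈ Set.Icc (0:ℝ) 1 := norm_mem_Icc hx
      have hrpos : (0:ℝ) < ‖x‖ := norm_pos_iff.2 hx0
      have hfr : 0 < f ‖x‖ := hf.f_pos hr hrpos
      have hy0 : radial f x ≠ 0 := hf.radial_ne_zero hx hx0
      rw [radial_apply (f^[n]) hy0, hf.norm_radial' hx, radial_apply f hx0, smul_smul,
        radial_apply (f^[n + 1]) hx0, Function.iterate_succ_apply]
      congr 1
      field_simp

lemma uniqueDiffOnB : UniqueDiffOn ℝ (Metric.closedBall (0:E) 1) :=
  uniqueDiffOn_convex (convex_closedBall _ _)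
    (by rw [interior_closedBall (0:E) one_ne_zero]; exact ⟨0, mem_ball_self one_pos⟩)

lemma radial_ray {φ : ℝ → ℝ} (hφ0 : φ 0 = 0) {u : E} (hu : ‖u‖ = 1) {t : ℝ}
    (ht : 0 ≤ t) : radial φ (t • u) = φ t • u := by
  rcases eq_or_lt_of_le ht with h0 | h0
  · rw [← h0, zero_smul, radial_zero, hφ0, zero_smul]
  · have hnz : t • u ≠ 0 := by
      rw [← norm_pos_iff, norm_smul, hu, Real.norm_eq_abs, abs_of_pos h0]; simpa using h0
    rw [radial_apply φ hnz, norm_smul, hu, Real.norm_eq_abs, abs_of_pos h0, mul_one,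
      smul_smul, div_mul_cancel₀ _ h0.ne']

lemma Nice.fderiv_upper (hf : Nice f f') (n : ℕ) {x : E}
    (hx : x ∈ Metric.closedBall (0:E) 1) (hx0 : x ≠ 0) :
    ‖fderivWithin ℝ (radial (f^[n])) (Metric.closedBall (0:E) 1) x‖
      ≤ max 2 (derivWithin (f^[n]) (Set.Icc 0 1) ‖x‖) := by
  have hr : ‖x‖ ∈ Set.Icc (0:ℝ) 1 := norm_mem_Icc hx
  have hrpos : (0:ℝ) < ‖x‖ := norm_pos_iff.2 hx0
  have hd : HasDerivWithinAt (f^[n]) (derivWithin (f^[n]) (Set.Icc 0 1) ‖x‖)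
      (Set.Icc 0 1) ‖x‖ := ((hf.diff_iter n) _ hr).hasDerivWithinAt
  have hD := hasFDerivWithinAt_radial hx0 hd
  rw [hD.fderivWithin (uniqueDiffOnB x hx)]
  have hfnn : 0 ≤ f^[n] ‖x‖ := (hf.mapsTo_iter n hr).1
  have hb := norm_Dmap_le (φ := f^[n]) (d := derivWithin (f^[n]) (Set.Icc 0 1) ‖x‖) hx0
    (div_nonneg hfnn hrpos.le) (hf.derivWithin_iter_pos n _ hr).le
  refine hb.trans (max_le_max ?_ le_rfl)
  rw [div_le_iff₀ hrpos]
  linarith [hf.iter_le_two_mul n ‖x‖ hr]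

lemma Nice.fderiv_zero (hf : Nice f f') (n : ℕ) :
    fderivWithin ℝ (radial (f^[n])) (Metric.closedBall (0:E) 1) 0
      = ContinuousLinearMap.id ℝ E := by
  have heq : radial (f^[n]) =ᶠ[𝓝[Metric.closedBall (0:E) 1] 0] (id : E → E) := by
    have hball : ∀ᶠ y in 𝓝 (0:E), ‖y‖ < 1/3 := by
      filter_upwards [Metric.ball_mem_nhds (0:E) (by norm_num : (0:ℝ) < 1/3)] with y hy
      exact mem_ball_zero_iff.1 hy
    filter_upwards [nhdsWithin_le_nhds hball] with y hy
    exact radial_small (hf.idout_iter n) y hy.le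
  rw [heq.fderivWithin_eq (radial_zero _)]
  exact fderivWithin_id (uniqueDiffOnB 0 (mem_closedBall_self zero_le_one))

lemma Nice.fderiv_lower (hf : Nice f f') (n : ℕ) {u : E} (hu : ‖u‖ = 1) {r : ℝ}
    (hr : r ∈ Set.Icc (0:ℝ) 1) :
    derivWithin (f^[n]) (Set.Icc 0 1) r
      ≤ ‖fderivWithin ℝ (radial (f^[n])) (Metric.closedBall (0:E) 1) (r • u)‖ := by
  have hxB : r • u ∈ Metric.closedBall (0:E) 1 := by
    rw [mem_closedBall_zero_iff, norm_smul, hu, mul_one, Real.norm_eq_abs,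
      abs_of_nonneg hr.1]
    exact hr.2
  have hdiffG : DifferentiableWithinAt ℝ (radial (f^[n])) (Metric.closedBall (0:E) 1)
      (r • u) :=
    ((contDiffOn_radial (hf.smooth_iter n) (hf.idout_iter n)).differentiableOn
      (by simp)) _ hxB
  set Dx := fderivWithin ℝ (radial (f^[n])) (Metric.closedBall (0:E) 1) (r • u) with hDx
  have hD : HasFDerivWithinAt (radial (f^[n])) Dx (Metric.closedBall (0:E) 1) (r • u) :=
    hdiffG.hasFDerivWithinAt
  have hT : HasDerivWithinAt (fun t : ℝ => t • u) u (Set.Icc 0 1) r := by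
    simpa using (hasDerivWithinAt_id r (Set.Icc 0 1)).smul_const u
  have hmapsT : Set.MapsTo (fun t : ℝ => t • u) (Set.Icc (0:ℝ) 1)
      (Metric.closedBall (0:E) 1) := by
    intro t ht
    rw [mem_closedBall_zero_iff, norm_smul, hu, mul_one, Real.norm_eq_abs,
      abs_of_nonneg ht.1]
    exact ht.2
  have hcomp : HasDerivWithinAt (radial (f^[n]) ∘ fun t : ℝ => t • u) (Dx u)
      (Set.Icc 0 1) r := hD.comp_hasDerivWithinAt r hT hmapsT
  have hcomp' : HasDerivWithinAt (fun t : ℝ => f^[n] t • u) (Dx u) (Set.Icc 0 1) r := by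
    refine hcomp.congr ?_ ?_
    · intro t ht
      exact (radial_ray (hf.iter_zero_fix n) hu ht.1).symm
    · exact (radial_ray (hf.iter_zero_fix n) hu hr.1).symm
  have hsm : HasDerivWithinAt (fun t : ℝ => f^[n] t • u)
      ((derivWithin (f^[n]) (Set.Icc 0 1) r) • u) (Set.Icc 0 1) r :=
    ((hf.diff_iter n _ hr).hasDerivWithinAt).smul_const u
  have huniq : Dx u = (derivWithin (f^[n]) (Set.Icc 0 1) r) • u := by
    rw [← hcomp'.derivWithin (uniqueDiffOn_Icc_zero_one r hr),
      ← hsm.derivWithin (uniqueDiffOn_Icc_zero_one r hr)]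
  calc derivWithin (f^[n]) (Set.Icc 0 1) r
      ≤ |derivWithin (f^[n]) (Set.Icc 0 1) r| := le_abs_self _
    _ = ‖(derivWithin (f^[n]) (Set.Icc 0 1) r) • u‖ := by
        rw [norm_smul, hu, mul_one, Real.norm_eq_abs]
    _ = ‖Dx u‖ := by rw [huniq]
    _ ≤ ‖Dx‖ * ‖u‖ := Dx.le_opNorm u
    _ = ‖Dx‖ := by rw [hu, mul_one]

lemma Nice.contDiffOn_radial_iter (hf : Nice f f') (n : ℕ) :
    ContDiffOn ℝ (⊤ : ℕ∞) (radial (f^[n])) (Metric.closedBall (0:E) 1) :=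
  contDiffOn_radial (hf.smooth_iter n) (hf.idout_iter n)

lemma Nice.bddAbove_fderiv [ProperSpace E] (hf : Nice f f') (n : ℕ) :
    BddAbove (Set.range fun x : Metric.closedBall (0:E) 1 =>
      ‖fderivWithin ℝ (radial (f^[n])) (Metric.closedBall (0:E) 1) (x : E)‖) := by
  have hcont : ContinuousOn
      (fun y : E => ‖fderivWithin ℝ (radial (f^[n])) (Metric.closedBall (0:E) 1) y‖)
      (Metric.closedBall (0:E) 1) :=
    ((hf.contDiffOn_radial_iter (E := E) n).continuousOn_fderivWithin
      uniqueDiffOnB (by simp)).norm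
  have hbd := ((isCompact_closedBall (0:E) 1).image_of_continuousOn hcont).bddAbove
  rw [Set.image_eq_range] at hbd
  exact hbd

end RadExt

/-- Radial extension: if `h` is a `C^∞` diffeomorphism of `[0,1]` equal to the identity
outside `[1/3, 2/3]`, then `g(x) = x · h(|x|)/|x|` (and `g(0) = 0`) is a `C^∞`
diffeomorphism of the closed unit ball `B ⊂ ℝ^m`, equal to the identity on `{|x| ≤ 1/3}`
and on `{2/3 ≤ |x| ≤ 1}`, and `Γ_n(h) ≤ Γ_n(g) ≤ max(2, Γ_n(h))` for every `n`. -/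
theorem radial_extension (m : ℕ) (hm : 1 ≤ m) (h h' : ℝ → ℝ) (hh : IsDiff0 h h')
    (hsmooth : ContDiffOn ℝ (⊤ : ℕ∞) h (Set.Icc 0 1))
    (hsmooth' : ContDiffOn ℝ (⊤ : ℕ∞) h' (Set.Icc 0 1))
    (hid : ∀ x ∈ Set.Icc (0:ℝ) 1, x ∉ Set.Icc (1/3 : ℝ) (2/3) → h x = x)
    (g g' : EuclideanSpace ℝ (Fin m) → EuclideanSpace ℝ (Fin m))
    (hg : ∀ x : EuclideanSpace ℝ (Fin m),
      g x = if x = 0 then 0 else (h ‖x‖ / ‖x‖) • x)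
    (hg' : ∀ x : EuclideanSpace ℝ (Fin m),
      g' x = if x = 0 then 0 else (h' ‖x‖ / ‖x‖) • x) :
    ContDiffOn ℝ (⊤ : ℕ∞) g (Metric.closedBall 0 1) ∧
    ContDiffOn ℝ (⊤ : ℕ∞) g' (Metric.closedBall 0 1) ∧
    Set.BijOn g (Metric.closedBall 0 1) (Metric.closedBall 0 1) ∧
    Set.InvOn g' g (Metric.closedBall 0 1) (Metric.closedBall 0 1) ∧
    (∀ x : EuclideanSpace ℝ (Fin m), ‖x‖ ≤ 1/3 → g x = x) ∧
    (∀ x ∈ Metric.closedBall (0 : EuclideanSpace ℝ (Fin m)) 1, (2/3 : ℝ) ≤ ‖x‖ → g x = x) ∧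
    ∀ n : ℕ, Gamma h h' n ≤ GammaB g g' n ∧ GammaB g g' n ≤ max 2 (Gamma h h' n) := by
  have hNice : RadExt.Nice h h' := ⟨hh, hsmooth, hsmooth', hid⟩
  have hNice' : RadExt.Nice h' h := hNice.symm
  have hgfun : g = RadExt.radial h := funext fun x => by rw [hg x]; unfold RadExt.radial; split_ifs <;> rfl
  have hg'fun : g' = RadExt.radial h' := funext fun x => by rw [hg' x]; unfold RadExt.radial; split_ifs <;> rfl
  have hInv : Set.InvOn g' g (Metric.closedBall (0 : EuclideanSpace ℝ (Fin m)) 1)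
      (Metric.closedBall 0 1) := by
    constructor
    · intro x hx; rw [hgfun, hg'fun]; exact hNice.radial_comp x hx
    · intro x hx; rw [hgfun, hg'fun]; exact hNice'.radial_comp x hx
  have hmapsg : Set.MapsTo g (Metric.closedBall (0 : EuclideanSpace ℝ (Fin m)) 1)
      (Metric.closedBall 0 1) := by rw [hgfun]; exact hNice.radial_mapsTo
  have hmapsg' : Set.MapsTo g' (Metric.closedBall (0 : EuclideanSpace ℝ (Fin m)) 1)
      (Metric.closedBall 0 1) := by rw [hg'fun]; exact hNice'.radial_mapsTo
  refine ⟨?_, ?_, ?_, hInv, ?_, ?_, ?_⟩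
  · rw [hgfun]; exact RadExt.contDiffOn_radial hsmooth hNice.idout'
  · rw [hg'fun]; exact RadExt.contDiffOn_radial hsmooth' hNice'.idout'
  · exact hInv.bijOn hmapsg hmapsg'
  · intro x hx; rw [hgfun]; exact RadExt.radial_small hNice.idout' x hx
  · intro x hx h23; rw [hgfun]; exact RadExt.radial_big hNice.idout' x hx h23
  intro n
  haveI : Nonempty (Set.Icc (0:ℝ) 1) := ⟨⟨0, by norm_num⟩⟩
  haveI : Nonempty (Metric.closedBall (0 : EuclideanSpace ℝ (Fin m)) 1) :=
    ⟨⟨0, Metric.mem_closedBall_self zero_le_one⟩⟩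
  set u : EuclideanSpace ℝ (Fin m) := EuclideanSpace.single (⟨0, hm⟩ : Fin m) (1:ℝ) with hu_def
  have hu : ‖u‖ = 1 := by rw [hu_def, EuclideanSpace.norm_single]; norm_num
  have hcongr : ∀ x ∈ Metric.closedBall (0 : EuclideanSpace ℝ (Fin m)) 1,
      fderivWithin ℝ (g^[n]) (Metric.closedBall 0 1) x
        = fderivWithin ℝ (RadExt.radial (h^[n])) (Metric.closedBall 0 1) x := by
    intro x hx
    apply fderivWithin_congr
    · intro y hy; rw [hgfun]; exact hNice.radial_iter n y hy
    · rw [hgfun]; exact hNice.radial_iter n x hx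
  have hcongr' : ∀ x ∈ Metric.closedBall (0 : EuclideanSpace ℝ (Fin m)) 1,
      fderivWithin ℝ (g'^[n]) (Metric.closedBall 0 1) x
        = fderivWithin ℝ (RadExt.radial (h'^[n])) (Metric.closedBall 0 1) x := by
    intro x hx
    apply fderivWithin_congr
    · intro y hy; rw [hg'fun]; exact hNice'.radial_iter n y hy
    · rw [hg'fun]; exact hNice'.radial_iter n x hx
  have hfun_eq : (fun x : Metric.closedBall (0 : EuclideanSpace ℝ (Fin m)) 1 =>
      ‖fderivWithin ℝ (g^[n]) (Metric.closedBall 0 1) (x : EuclideanSpace ℝ (Fin m))‖)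
      = fun x : Metric.closedBall (0 : EuclideanSpace ℝ (Fin m)) 1 =>
      ‖fderivWithin ℝ (RadExt.radial (h^[n])) (Metric.closedBall 0 1)
        (x : EuclideanSpace ℝ (Fin m))‖ :=
    funext fun x => by rw [hcongr _ x.2]
  have hfun_eq' : (fun x : Metric.closedBall (0 : EuclideanSpace ℝ (Fin m)) 1 =>
      ‖fderivWithin ℝ (g'^[n]) (Metric.closedBall 0 1) (x : EuclideanSpace ℝ (Fin m))‖)
      = fun x : Metric.closedBall (0 : EuclideanSpace ℝ (Fin m)) 1 =>
      ‖fderivWithin ℝ (RadExt.radial (h'^[n])) (Metric.closedBall 0 1)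
        (x : EuclideanSpace ℝ (Fin m))‖ :=
    funext fun x => by rw [hcongr' _ x.2]
  have hbddB : BddAbove (Set.range fun x : Metric.closedBall (0 : EuclideanSpace ℝ (Fin m)) 1 =>
      ‖fderivWithin ℝ (g^[n]) (Metric.closedBall 0 1) (x : EuclideanSpace ℝ (Fin m))‖) := by
    rw [hfun_eq]; exact hNice.bddAbove_fderiv n
  have hbddB' : BddAbove (Set.range fun x : Metric.closedBall (0 : EuclideanSpace ℝ (Fin m)) 1 =>
      ‖fderivWithin ℝ (g'^[n]) (Metric.closedBall 0 1) (x : EuclideanSpace ℝ (Fin m))‖) := by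
    rw [hfun_eq']; exact hNice'.bddAbove_fderiv n
  constructor
  · -- lower bound
    unfold Gamma GammaB
    refine max_le_max ?_ ?_
    · refine ciSup_le fun r => ?_
      have hxB : (r : ℝ) • u ∈ Metric.closedBall (0 : EuclideanSpace ℝ (Fin m)) 1 := by
        rw [mem_closedBall_zero_iff, norm_smul, hu, mul_one, Real.norm_eq_abs,
          abs_of_nonneg r.2.1]
        exact r.2.2
      calc derivWithin (h^[n]) (Set.Icc 0 1) (r : ℝ)
          ≤ ‖fderivWithin ℝ (RadExt.radial (h^[n])) (Metric.closedBall 0 1) ((r:ℝ) • u)‖ :=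
            hNice.fderiv_lower n hu r.2
        _ = ‖fderivWithin ℝ (g^[n]) (Metric.closedBall 0 1) ((r:ℝ) • u)‖ := by
            rw [hcongr _ hxB]
        _ ≤ _ := le_ciSup_of_le hbddB ⟨(r:ℝ) • u, hxB⟩ le_rfl
    · refine ciSup_le fun r => ?_
      have hxB : (r : ℝ) • u ∈ Metric.closedBall (0 : EuclideanSpace ℝ (Fin m)) 1 := by
        rw [mem_closedBall_zero_iff, norm_smul, hu, mul_one, Real.norm_eq_abs,
          abs_of_nonneg r.2.1]
        exact r.2.2
      calc derivWithin (h'^[n]) (Set.Icc 0 1) (r : ℝ)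
          ≤ ‖fderivWithin ℝ (RadExt.radial (h'^[n])) (Metric.closedBall 0 1) ((r:ℝ) • u)‖ :=
            hNice'.fderiv_lower n hu r.2
        _ = ‖fderivWithin ℝ (g'^[n]) (Metric.closedBall 0 1) ((r:ℝ) • u)‖ := by
            rw [hcongr' _ hxB]
        _ ≤ _ := le_ciSup_of_le hbddB' ⟨(r:ℝ) • u, hxB⟩ le_rfl
  · -- upper bound
    have hup : ∀ x : Metric.closedBall (0 : EuclideanSpace ℝ (Fin m)) 1,
        ‖fderivWithin ℝ (g^[n]) (Metric.closedBall 0 1) (x : EuclideanSpace ℝ (Fin m))‖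
          ≤ max 2 (Gamma h h' n) := by
      intro x
      rw [hcongr _ x.2]
      by_cases hx0 : (x : EuclideanSpace ℝ (Fin m)) = 0
      · rw [hx0, hNice.fderiv_zero n]
        exact le_trans (le_trans ContinuousLinearMap.norm_id_le one_le_two) (le_max_left _ _)
      · have hkey : derivWithin (h^[n]) (Set.Icc 0 1) ‖(x : EuclideanSpace ℝ (Fin m))‖
            ≤ Gamma h h' n := by
          unfold Gamma
          exact le_trans (le_ciSup (hNice.bdd_iter n)
            (⟨‖(x : EuclideanSpace ℝ (Fin m))‖, RadExt.norm_mem_Icc x.2⟩ : Set.Icc (0:ℝ) 1))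
            (le_max_left _ _)
        exact (hNice.fderiv_upper n x.2 hx0).trans (max_le_max le_rfl hkey)
    have hup' : ∀ x : Metric.closedBall (0 : EuclideanSpace ℝ (Fin m)) 1,
        ‖fderivWithin ℝ (g'^[n]) (Metric.closedBall 0 1) (x : EuclideanSpace ℝ (Fin m))‖
          ≤ max 2 (Gamma h h' n) := by
      intro x
      rw [hcongr' _ x.2]
      by_cases hx0 : (x : EuclideanSpace ℝ (Fin m)) = 0
      · rw [hx0, hNice'.fderiv_zero n]
        exact le_trans (le_trans ContinuousLinearMap.norm_id_le one_le_two) (le_max_left _ _)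
      · have hkey : derivWithin (h'^[n]) (Set.Icc 0 1) ‖(x : EuclideanSpace ℝ (Fin m))‖
            ≤ Gamma h h' n := by
          unfold Gamma
          exact le_trans (le_ciSup (hNice'.bdd_iter n)
            (⟨‖(x : EuclideanSpace ℝ (Fin m))‖, RadExt.norm_mem_Icc x.2⟩ : Set.Icc (0:ℝ) 1))
            (le_max_right _ _)
        exact (hNice'.fderiv_upper n x.2 hx0).trans (max_le_max le_rfl hkey)
    unfold GammaB
    exact max_le (ciSup_le hup) (ciSup_le hup')
end
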